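/- arXiv:1110.4329 — 10 statements merged into one kernel-verified Lean document; each statement's English description precedes it below -/
import Mathlib

section
/- Let a, b, c be points in the Euclidean plane ℝ² with pairwise distances at most 2. Then: (i) ρ(a,b) + ρ(b,c) > ρ(a,c) if and only if b does not belong to the closed spindle [a,c]_s; (ii) ρ(a,b) + ρ(b,c) = ρ(a,c) if and only if b belongs to the topological boundary of [a,c]_s; (iii) ρ(a,b) + ρ(b,c) < ρ(a,c) if and only if b belongs to the interior of [a,c]_s. -/
noncomputable section

/-- `B[X]`: the intersection of all closed unit balls centered at points of `X`
(`Set.univ` when `X = ∅`). -/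
def ballInter {n : ℕ} (X : Set (EuclideanSpace ℝ (Fin n))) :
    Set (EuclideanSpace ℝ (Fin n)) :=
  ⋂ x ∈ X, Metric.closedBall x 1

/-- The closed spindle `[a,b]_s`: `B[B[{a,b}]]` if `dist a b ≤ 2`, all of the space
otherwise. -/
def spindle {n : ℕ} (a b : EuclideanSpace ℝ (Fin n)) :
    Set (EuclideanSpace ℝ (Fin n)) :=
  if dist a b ≤ 2 then ballInter (ballInter {a, b}) else Set.univ

/-- A set is spindle convex if it contains the closed spindle of any two of its points. -/
def SpindleConvex {n : ℕ} (C : Set (EuclideanSpace ℝ (Fin n))) : Prop :=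
  ∀ a ∈ C, ∀ b ∈ C, spindle a b ⊆ C

/-- The spindle convex hull: the intersection of all spindle convex sets containing `X`. -/
def spindleHull {n : ℕ} (X : Set (EuclideanSpace ℝ (Fin n))) :
    Set (EuclideanSpace ℝ (Fin n)) :=
  ⋂₀ {C : Set (EuclideanSpace ℝ (Fin n)) | X ⊆ C ∧ SpindleConvex C}

/-- Arc-distance `ρ(a,b) = 2 · arcsin(‖a - b‖ / 2)`. -/
def arcDist {n : ℕ} (a b : EuclideanSpace ℝ (Fin n)) : ℝ :=
  2 * Real.arcsin (dist a b / 2)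

/-!
The arc-distance `ρ(x, y)` is the central angle of the chord `xy` in a unit circle. An isometry of
the plane onto `ℂ` puts `a, c` at `∓t`, `t = ‖a - c‖ / 2`; then `B[{a, c}]` is the lens cut out by the
unit discs centred at `±t`, and the spindle `[a, c]_s` is the lens cut out by the unit discs centred
at `±i√(1 - t²)`, whose boundary circles pass through `±t`. With `s = √(1 - t²) = cos (ρ(a, c) / 2)`,
both `ρ(a, b) + ρ(b, c) ≤ ρ(a, c)` and `b ∈ [a, c]_s` are equivalent to
`‖a - b‖² + ‖b - c‖² + 2 s ‖a - b‖ ‖b - c‖ ≤ ‖a - c‖²`, which by the law of cosines says that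
`∠abc ≥ π - ρ(a, c) / 2` (the inscribed angle theorem); the same holds with strict inequalities
and the interior of the spindle, and the boundary case follows.
-/
open Real Set Metric
open Complex (I)
open scoped RealInnerProductSpace

theorem le_iff_le_of_sq_sub_sq_eq_mul {A B L c : ℝ} (hA : 0 ≤ A) (hB : 0 ≤ B) (hc : 0 < c)
    (h : L ^ 2 - B ^ 2 = c * (L ^ 2 - A ^ 2)) : (A ≤ L ↔ B ≤ L) ∧ (A < L ↔ B < L) := by
  refine ⟨⟨fun hAL => ?_, fun hBL => ?_⟩, ⟨fun hAL => ?_, fun hBL => ?_⟩⟩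
  · have hL := hA.trans hAL
    rw [← sq_le_sq₀ hB hL]
    nlinarith [(sq_le_sq₀ hA hL).2 hAL]
  · have hL := hB.trans hBL
    rw [← sq_le_sq₀ hA hL]
    nlinarith [(sq_le_sq₀ hB hL).2 hBL]
  · have hL := hA.trans hAL.le
    rw [← sq_lt_sq₀ hB hL]
    nlinarith [(sq_lt_sq₀ hA hL).2 hAL]
  · have hL := hB.trans hBL.le
    rw [← sq_lt_sq₀ hA hL]
    nlinarith [(sq_lt_sq₀ hB hL).2 hBL]

theorem two_mul_abs_le_iff_mul_le {s t v L K : ℝ} (hs : 0 ≤ s) (hK : 0 ≤ K)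
    (hst : s ^ 2 + t ^ 2 = 1) (hK2 : K ^ 2 = L ^ 2 + 4 * t ^ 2 * v ^ 2) (hL : L + v ^ 2 ≤ t ^ 2) :
    (2 * s * |v| ≤ L ↔ s * K ≤ L) ∧ (2 * s * |v| < L ↔ s * K < L) := by
  rcases eq_or_ne t 0 with rfl | ht
  · have hs1 : s = 1 := by nlinarith
    subst hs1
    have hKL : K = |L| := by rw [← sqrt_sq hK, hK2]; simp [sqrt_sq_eq_abs]
    have hv := abs_nonneg v
    constructor <;> constructor <;> intro h <;> cases abs_cases L <;> nlinarith [sq_abs v]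
  · have ht2 : 0 < t ^ 2 := by positivity
    refine le_iff_le_of_sq_sub_sq_eq_mul (by positivity) (by positivity) ht2 ?_
    linear_combination (-s ^ 2) * hK2 - L ^ 2 * hst + 4 * s ^ 2 * t ^ 2 * sq_abs v

theorem arcsin_add_arcsin_le_arcsin_iff {x y z : ℝ} (hx : x ∈ Icc 0 1) (hy : y ∈ Icc 0 1)
    (hz : z ∈ Icc 0 1) :
    (arcsin x + arcsin y ≤ arcsin z ↔ x ^ 2 + y ^ 2 + 2 * √(1 - z ^ 2) * x * y ≤ z ^ 2) ∧
    (arcsin x + arcsin y < arcsin z ↔ x ^ 2 + y ^ 2 + 2 * √(1 - z ^ 2) * x * y < z ^ 2) := by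
  obtain ⟨hx0, hx1⟩ := hx
  obtain ⟨hy0, hy1⟩ := hy
  obtain ⟨hz0, hz1⟩ := hz
  set c := √(1 - z ^ 2)
  have hc2 : c ^ 2 = 1 - z ^ 2 := sq_sqrt (by nlinarith)
  have hx' : x ∈ Icc (-1) 1 := ⟨by linarith, hx1⟩
  have hdiff : arcsin z - arcsin y ∈ Icc (-(π / 2)) (π / 2) := by
    have := arcsin_nonneg.2 hy0
    have := arcsin_nonneg.2 hz0
    constructor <;> linarith [arcsin_le_pi_div_two y, arcsin_le_pi_div_two z]
  have hsin : sin (arcsin z - arcsin y) = √(z ^ 2 * (1 - y ^ 2)) - c * y := by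
    rw [sin_sub, sin_arcsin (by linarith) hz1, sin_arcsin (by linarith) hy1, cos_arcsin,
      cos_arcsin, sqrt_mul' _ (by nlinarith), sqrt_sq hz0]
  have hpos : 0 ≤ x + c * y := by positivity
  have hkey : z ^ 2 * (1 - y ^ 2) - (x + c * y) ^ 2 = z ^ 2 - (x ^ 2 + y ^ 2 + 2 * c * x * y) := by
    linear_combination (-y ^ 2) * hc2
  constructor
  · rw [← le_sub_iff_add_le, arcsin_le_iff_le_sin hx' hdiff, hsin, le_sub_iff_add_le,
      le_sqrt hpos (mul_nonneg (sq_nonneg z) (by nlinarith)), ← sub_nonneg, hkey, sub_nonneg]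
  · rw [← lt_sub_iff_add_lt, arcsin_lt_iff_lt_sin hx' hdiff, hsin, lt_sub_iff_add_lt,
      lt_sqrt hpos, ← sub_pos, hkey, sub_pos]

theorem arcDist_add_arcDist_le_iff {n : ℕ} {a b c : EuclideanSpace ℝ (Fin n)}
    (hab : dist a b ≤ 2) (hbc : dist b c ≤ 2) (hac : dist a c ≤ 2) :
    (arcDist a b + arcDist b c ≤ arcDist a c ↔ dist a b ^ 2 + dist b c ^ 2 +
      2 * √(1 - (dist a c / 2) ^ 2) * dist a b * dist b c ≤ dist a c ^ 2) ∧
    (arcDist a b + arcDist b c < arcDist a c ↔ dist a b ^ 2 + dist b c ^ 2 +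
      2 * √(1 - (dist a c / 2) ^ 2) * dist a b * dist b c < dist a c ^ 2) := by
  have half_mem {x y : EuclideanSpace ℝ (Fin n)} (h : dist x y ≤ 2) : dist x y / 2 ∈ Icc 0 1 :=
    ⟨by positivity, by linarith⟩
  obtain ⟨hle, hlt⟩ := arcsin_add_arcsin_le_arcsin_iff (half_mem hab) (half_mem hbc) (half_mem hac)
  simp only [arcDist]
  constructor
  · constructor
    · intro h; linarith [hle.1 (by linarith)]
    · intro h; linarith [hle.2 (by linarith)]
  · constructor
    · intro h; linarith [hlt.1 (by linarith)]
    · intro h; linarith [hlt.2 (by linarith)]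

section Lens

variable {E : Type*} [NormedAddCommGroup E]

def lens (w : E) : Set E := closedBall w 1 ∩ closedBall (-w) 1

variable [InnerProductSpace ℝ E] {w z : E}

theorem mem_lens_iff : z ∈ lens w ↔ ‖z‖ ^ 2 + 2 * |⟪z, w⟫| + ‖w‖ ^ 2 ≤ 1 := by
  rw [lens, mem_inter_iff, mem_closedBall, mem_closedBall, dist_eq_norm, dist_eq_norm,
    sub_neg_eq_add, ← sq_le_one_iff₀ (norm_nonneg _), ← sq_le_one_iff₀ (norm_nonneg _),
    norm_sub_sq_real, norm_add_sq_real]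
  rcases abs_cases ⟪z, w⟫ with ⟨h, _⟩ | ⟨h, _⟩ <;> rw [h] <;>
    exact ⟨fun h' => by linarith [h'.1, h'.2], fun h' => ⟨by linarith, by linarith⟩⟩

theorem mem_interior_lens_iff : z ∈ interior (lens w) ↔ ‖z‖ ^ 2 + 2 * |⟪z, w⟫| + ‖w‖ ^ 2 < 1 := by
  rw [lens, interior_inter, interior_closedBall _ one_ne_zero, interior_closedBall _ one_ne_zero,
    mem_inter_iff, mem_ball, mem_ball, dist_eq_norm, dist_eq_norm,
    sub_neg_eq_add, ← sq_lt_one_iff₀ (norm_nonneg _), ← sq_lt_one_iff₀ (norm_nonneg _),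
    norm_sub_sq_real, norm_add_sq_real]
  rcases abs_cases ⟪z, w⟫ with ⟨h, _⟩ | ⟨h, _⟩ <;> rw [h] <;>
    exact ⟨fun h' => by linarith [h'.1, h'.2], fun h' => ⟨by linarith, by linarith⟩⟩

end Lens

section ComplexLens

theorem dist_sq_eq_re_im (z w : ℂ) : dist z w ^ 2 = (z.re - w.re) ^ 2 + (z.im - w.im) ^ 2 := by
  rw [Complex.dist_eq_re_im, sq_sqrt (by positivity)]

variable {t : ℝ}

theorem forall_dist_le_one_iff_mem_lens (ht : 0 ≤ t) (ht1 : t ≤ 1) (z : ℂ) :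
    (∀ x ∈ lens (t : ℂ), dist z x ≤ 1) ↔ z ∈ lens (√(1 - t ^ 2) * I) := by
  set s := √(1 - t ^ 2)
  have hs : 0 ≤ s := sqrt_nonneg _
  have hst : s ^ 2 + t ^ 2 = 1 := by rw [sq_sqrt (by nlinarith)]; ring
  constructor
  · intro H
    have hvertex : ∀ x : ℂ, x.re = 0 → x.im ^ 2 = s ^ 2 → x ∈ lens (t : ℂ) := by
      intro x hre him
      rw [mem_lens_iff]
      simp [Complex.sq_norm, Complex.normSq_apply, Complex.inner, hre]
      nlinarith
    exact ⟨H _ (hvertex _ (by simp) (by simp)), H _ (hvertex _ (by simp) (by simp))⟩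
  · intro hz x hx
    rw [mem_lens_iff] at hz hx
    simp only [Complex.sq_norm, Complex.normSq_apply, Complex.inner] at hz hx
    simp [abs_of_nonneg hs, abs_of_nonneg ht] at hz hx
    -- `|Re z| ≤ t` and `|Im x| ≤ s` bound the cross terms of `‖z - x‖²`.
    have hu : |z.re| ≤ t := abs_le_of_sq_le_sq (by nlinarith [abs_nonneg z.im]) ht
    have hq : |x.im| ≤ s := abs_le_of_sq_le_sq (by nlinarith [abs_nonneg x.re]) hs
    rw [← sq_le_one_iff₀ dist_nonneg, dist_sq_eq_re_im]
    nlinarith [neg_abs_le (z.re * x.re), neg_abs_le (z.im * x.im), abs_mul z.re x.re,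
      abs_mul z.im x.im, mul_le_mul_of_nonneg_right hu (abs_nonneg x.re),
      mul_le_mul_of_nonneg_right hq (abs_nonneg z.im)]

theorem mem_lens_iff_inscribed (ht : 0 ≤ t) (ht1 : t ≤ 1) (z : ℂ) :
    (z ∈ lens (√(1 - t ^ 2) * I) ↔ dist (-(t : ℂ)) z ^ 2 + dist z t ^ 2 +
      2 * √(1 - t ^ 2) * dist (-(t : ℂ)) z * dist z t ≤ (2 * t) ^ 2) ∧
    (z ∈ interior (lens (√(1 - t ^ 2) * I)) ↔ dist (-(t : ℂ)) z ^ 2 + dist z t ^ 2 +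
      2 * √(1 - t ^ 2) * dist (-(t : ℂ)) z * dist z t < (2 * t) ^ 2) := by
  set s := √(1 - t ^ 2)
  have hs : 0 ≤ s := sqrt_nonneg _
  have hst : s ^ 2 + t ^ 2 = 1 := by rw [sq_sqrt (by nlinarith)]; ring
  have h₁ : dist (-(t : ℂ)) z ^ 2 = (z.re + t) ^ 2 + z.im ^ 2 := by
    rw [dist_sq_eq_re_im]; simp; ring
  have h₂ : dist z t ^ 2 = (z.re - t) ^ 2 + z.im ^ 2 := by
    rw [dist_sq_eq_re_im]; simp
  have hlens : ‖z‖ ^ 2 + 2 * |⟪z, (s : ℂ) * I⟫| + ‖(s : ℂ) * I‖ ^ 2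
      = z.re ^ 2 + z.im ^ 2 + 2 * s * |z.im| + s ^ 2 := by
    simp [Complex.sq_norm, Complex.normSq_apply, Complex.inner, abs_of_nonneg hs]; ring
  -- With `L = t² - ‖z‖²`, the lens condition reads `2 s |Im z| ≤ L` and the distance condition
  -- reads `s ‖z + t‖ ‖z - t‖ ≤ L`.
  obtain ⟨hle, hlt⟩ := two_mul_abs_le_iff_mul_le (v := z.im) (L := t ^ 2 - z.re ^ 2 - z.im ^ 2)
    (K := dist (-(t : ℂ)) z * dist z t) hs (mul_nonneg dist_nonneg dist_nonneg) hst
    (by rw [mul_pow, h₁, h₂]; ring) (by nlinarith)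
  rw [mem_lens_iff, mem_interior_lens_iff, hlens]
  constructor
  · constructor
    · intro h; linarith [hle.1 (by linarith)]
    · intro h; linarith [hle.2 (by linarith)]
  · constructor
    · intro h; linarith [hlt.1 (by linarith)]
    · intro h; linarith [hlt.2 (by linarith)]

end ComplexLens

theorem mem_ballInter {n : ℕ} {X : Set (EuclideanSpace ℝ (Fin n))} {y : EuclideanSpace ℝ (Fin n)} :
    y ∈ ballInter X ↔ ∀ x ∈ X, dist y x ≤ 1 := by
  simp [ballInter]

theorem ballInter_pair {n : ℕ} (a b : EuclideanSpace ℝ (Fin n)) :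
    ballInter {a, b} = closedBall a 1 ∩ closedBall b 1 := by
  simp only [ballInter, biInter_insert, biInter_singleton]

theorem isClosed_spindle {n : ℕ} (a b : EuclideanSpace ℝ (Fin n)) : IsClosed (spindle a b) := by
  unfold spindle ballInter
  split_ifs
  · exact isClosed_biInter fun _ _ => isClosed_closedBall
  · exact isClosed_univ

theorem exists_isometryEquiv_complex (a c : EuclideanSpace ℝ (Fin 2)) :
    ∃ φ : EuclideanSpace ℝ (Fin 2) ≃ᵢ ℂ,
      φ a = -((dist a c / 2 : ℝ) : ℂ) ∧ φ c = ((dist a c / 2 : ℝ) : ℂ) := by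
  let g := Complex.orthonormalBasisOneI.repr.symm.toIsometryEquiv
  set w := g c - g a
  let ζ := Circle.exp (-w.arg)
  have hζ : (ζ : ℂ) * w = dist a c := by
    rw [dist_comm, ← g.dist_eq, Complex.dist_eq]
    conv_lhs => rw [← Complex.norm_mul_exp_arg_mul_I w]
    rw [Circle.coe_exp, mul_left_comm, ← Complex.exp_add]
    simp [w]
  refine ⟨(g.trans (IsometryEquiv.subRight ((g a + g c) / 2))).trans
    (rotation ζ).toIsometryEquiv, ?_, ?_⟩ <;>
  simp only [IsometryEquiv.trans_apply, IsometryEquiv.subRight_apply,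
    LinearIsometryEquiv.coe_toIsometryEquiv, rotation_apply] <;>
  push_cast
  · linear_combination (-1 / 2 : ℂ) * hζ
  · linear_combination (1 / 2 : ℂ) * hζ

theorem spindle_eq_preimage_lens {a c : EuclideanSpace ℝ (Fin 2)} (hac : dist a c ≤ 2)
    (φ : EuclideanSpace ℝ (Fin 2) ≃ᵢ ℂ) (ha : φ a = -((dist a c / 2 : ℝ) : ℂ))
    (hc : φ c = ((dist a c / 2 : ℝ) : ℂ)) :
    spindle a c = φ ⁻¹' lens (√(1 - (dist a c / 2) ^ 2) * I) := by
  have hpair : ballInter {a, c} = φ ⁻¹' lens ((dist a c / 2 : ℝ) : ℂ) := by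
    rw [lens, ← ha, ← hc, preimage_inter, φ.preimage_closedBall, φ.preimage_closedBall,
      φ.symm_apply_apply, φ.symm_apply_apply, inter_comm, ballInter_pair]
  ext y
  rw [spindle, if_pos hac, hpair, mem_ballInter, mem_preimage,
    ← forall_dist_le_one_iff_mem_lens (by positivity) (by linarith), φ.surjective.forall]
  simp only [mem_preimage, φ.dist_eq]

theorem mem_spindle_iff {a c : EuclideanSpace ℝ (Fin 2)} (hac : dist a c ≤ 2)
    (b : EuclideanSpace ℝ (Fin 2)) :
    (b ∈ spindle a c ↔ dist a b ^ 2 + dist b c ^ 2 +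
      2 * √(1 - (dist a c / 2) ^ 2) * dist a b * dist b c ≤ dist a c ^ 2) ∧
    (b ∈ interior (spindle a c) ↔ dist a b ^ 2 + dist b c ^ 2 +
      2 * √(1 - (dist a c / 2) ^ 2) * dist a b * dist b c < dist a c ^ 2) := by
  obtain ⟨φ, ha, hc⟩ := exists_isometryEquiv_complex a c
  rw [spindle_eq_preimage_lens hac φ ha hc, ← φ.coe_toHomeomorph,
    ← φ.toHomeomorph.preimage_interior, φ.coe_toHomeomorph, ← φ.dist_eq a b, ← φ.dist_eq b c]
  have ht1 : dist a c / 2 ≤ 1 := by linarith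
  set t := dist a c / 2
  rw [ha, hc, show dist a c = 2 * t by ring]
  exact mem_lens_iff_inscribed (by positivity) ht1 (φ b)

theorem arcDist_triangle_trichotomy (a b c : EuclideanSpace ℝ (Fin 2))
    (hab : dist a b ≤ 2) (hac : dist a c ≤ 2) (hbc : dist b c ≤ 2) :
    (arcDist a b + arcDist b c > arcDist a c ↔ b ∉ spindle a c) ∧
    (arcDist a b + arcDist b c = arcDist a c ↔ b ∈ frontier (spindle a c)) ∧
    (arcDist a b + arcDist b c < arcDist a c ↔ b ∈ interior (spindle a c)) := by
  obtain ⟨hle, hlt⟩ := arcDist_add_arcDist_le_iff hab hbc hac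
  obtain ⟨hmem, hint⟩ := mem_spindle_iff hac b
  rw [(isClosed_spindle a c).frontier_eq, mem_sdiff, hmem, hint, ← hle, ← hlt]
  exact ⟨not_le.symm, eq_iff_le_not_lt, Iff.rfl⟩
end
end

section
/- Let n ≥ 2, let C ⊆ ℝⁿ be a spindle convex set, let x ∈ C, and let v be a unit vector such that the hyperplane through x with normal v supports C at x, i.e. ⟨v, y − x⟩ ≤ 0 for all y ∈ C. Then C is contained in the closed unit ball with center x − v, i.e. C ⊆ {y : ‖y − (x − v)‖ ≤ 1}. -/
noncomputable section

/-!
Let `y ∈ C` lie outside the unit ball around `x - v`, and put `u = y - x`; this says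
`⟪v, u⟫ > -‖u‖² / 2`, while the support condition says `⟪v, u⟫ ≤ 0`. We find a point `z` of the
spindle `[x, y]_s ⊆ C` with `⟪v, z - x⟫ > 0`. If `‖u‖ > 2` the spindle is everything, and if
`‖u‖ = 2` it is the unit ball around the midpoint of `x` and `y`. If `‖u‖ < 2`, the bound
`|⟪v, u⟫| ≤ ‖u‖² / 2` is exactly what is needed for a unit circle through `x` and `y`, with
centre `c`, such that `v` is a nonnegative combination of `x - c` and `y - c`. Then `z = c + v`
lies on the short arc from `x` to `y`, hence in every unit ball containing `x` and `y`, and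
`⟪v, z - x⟫ = 1 - ⟪v, x - c⟫ > 0` since `x - c ≠ v` (otherwise `y` would lie on the unit sphere
around `x - v`).
-/

open RealInnerProductSpace

section InnerProductSpace

variable {E : Type*} [NormedAddCommGroup E] [InnerProductSpace ℝ E]

theorem inner_le_neg_half_norm_sq {x c c' : E} (hx : 1 ≤ ‖x - c‖) (hx' : ‖x - c'‖ ≤ 1) :
    ⟪c - c', x - c⟫ ≤ -‖c - c'‖ ^ 2 / 2 := by
  have h := norm_add_sq_real (c - c') (x - c)
  rw [show c - c' + (x - c) = x - c' by abel] at h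
  nlinarith [norm_nonneg (x - c')]

theorem exists_unit_chord_cone_mem {u v : E} (hv : ‖v‖ = 1) (hu0 : 0 < ‖u‖) (hu2 : ‖u‖ < 2)
    (hvu : |⟪v, u⟫| ≤ ‖u‖ ^ 2 / 2) :
    ∃ w : E, ∃ l m : ℝ, 0 ≤ l ∧ 0 ≤ m ∧ ‖w‖ = 1 ∧ ‖w + u‖ = 1 ∧ v = l • w + m • (w + u) := by
  set d := ‖u‖
  set a := ⟪v, u⟫
  have hd2 : d ^ 2 ≠ 0 := by positivity
  -- With `P ⟂ u`, `w = (h / b) • P - u / 2` and `w + u` are the two radii of a unit circle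
  -- ending at a chord `u` in the plane of `u` and `v`; `l + m = b / h`, `m - l = 2 a / d²`.
  set P := v - (a / d ^ 2) • u with hP
  have hPu : ⟪P, u⟫ = 0 := by
    rw [hP, inner_sub_left, real_inner_smul_left, real_inner_self_eq_norm_sq]
    field_simp
    ring
  have hpyth (s r : ℝ) : ‖s • P + r • u‖ ^ 2 = s ^ 2 * ‖P‖ ^ 2 + r ^ 2 * d ^ 2 := by
    rw [norm_add_sq_real, real_inner_smul_left, real_inner_smul_right, hPu, norm_smul, norm_smul,
      mul_pow, mul_pow, Real.norm_eq_abs, Real.norm_eq_abs, sq_abs, sq_abs]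
    ring
  have hvP : v = (1 : ℝ) • P + (a / d ^ 2) • u := by rw [hP]; module
  set b := ‖P‖
  have hb2 : b ^ 2 * d ^ 2 + a ^ 2 = d ^ 2 := by
    have := hpyth 1 (a / d ^ 2)
    rw [← hvP, hv] at this
    field_simp at this
    linarith
  have ha2 : 4 * a ^ 2 ≤ d ^ 4 := by nlinarith [sq_abs a, abs_nonneg a]
  have hb : 0 < b := by
    have had : a ^ 2 < d ^ 2 := by nlinarith [mul_lt_mul_of_pos_left hu2 hu0]
    have : 0 < b ^ 2 * d ^ 2 := by linarith
    exact (norm_nonneg P).lt_of_ne' fun hb0 => by simp [b, hb0] at this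
  set h := √(1 - d ^ 2 / 4)
  have hh2 : h ^ 2 = 1 - d ^ 2 / 4 := Real.sq_sqrt (by nlinarith)
  have hh : 0 < h := Real.sqrt_pos.mpr (by nlinarith)
  have hlm : |a / d ^ 2| ≤ b / (2 * h) := by
    rw [abs_div, abs_of_pos (by positivity : 0 < d ^ 2),
      div_le_div_iff₀ (by positivity) (by positivity)]
    have hsq : (|a| * (2 * h)) ^ 2 ≤ (b * d ^ 2) ^ 2 := by
      rw [mul_pow, mul_pow, mul_pow, sq_abs, hh2]
      nlinarith
    exact (le_abs_self _).trans (abs_le_of_sq_le_sq hsq (by positivity))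
  refine ⟨(h / b) • P + (-1 / 2 : ℝ) • u, b / (2 * h) - a / d ^ 2, b / (2 * h) + a / d ^ 2,
    by linarith [le_abs_self (a / d ^ 2)], by linarith [neg_abs_le (a / d ^ 2)], ?_, ?_, ?_⟩
  · rw [← pow_eq_one_iff_of_nonneg (norm_nonneg _) two_ne_zero, hpyth]
    field_simp
    linarith
  · rw [show (h / b) • P + (-1 / 2 : ℝ) • u + u = (h / b) • P + (1 / 2 : ℝ) • u by module,
      ← pow_eq_one_iff_of_nonneg (norm_nonneg _) two_ne_zero, hpyth]
    field_simp
    linarith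
  · rw [hvP]
    match_scalars <;> field_simp <;> ring

end InnerProductSpace

theorem mem_spindle_of_forall {n : ℕ} {a b z : EuclideanSpace ℝ (Fin n)} (hab : dist a b ≤ 2)
    (h : ∀ c', dist c' a ≤ 1 → dist c' b ≤ 1 → dist z c' ≤ 1) : z ∈ spindle a b := by
  rw [spindle, if_pos hab]
  simp only [ballInter, Set.mem_iInter, Metric.mem_closedBall, Set.mem_insert_iff,
    Set.mem_singleton_iff]
  exact fun c' hc' => h c' (hc' a (Or.inl rfl)) (hc' b (Or.inr rfl))

theorem mem_spindle_of_sub_eq_smul_add_smul {n : ℕ} {x y c z : EuclideanSpace ℝ (Fin n)}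
    {l m : ℝ} (hl : 0 ≤ l) (hm : 0 ≤ m) (hlm : 1 ≤ l + m) (hx : ‖x - c‖ = 1) (hy : ‖y - c‖ = 1)
    (hz : z - c = l • (x - c) + m • (y - c)) (hzc : ‖z - c‖ ≤ 1) : z ∈ spindle x y := by
  have hxy : dist x y ≤ 2 := by
    calc dist x y ≤ dist x c + dist y c := dist_triangle_right _ _ _
      _ = 2 := by rw [dist_eq_norm, dist_eq_norm, hx, hy]; norm_num
  refine mem_spindle_of_forall hxy fun c' hcx hcy => ?_
  have ix := inner_le_neg_half_norm_sq (c' := c') hx.ge (by rw [← dist_eq_norm']; exact hcx)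
  have iy := inner_le_neg_half_norm_sq (c' := c') hy.ge (by rw [← dist_eq_norm']; exact hcy)
  have hexp : ‖z - c'‖ ^ 2 =
      ‖c - c'‖ ^ 2 + 2 * (l * ⟪c - c', x - c⟫ + m * ⟪c - c', y - c⟫) + ‖z - c‖ ^ 2 := by
    rw [show z - c' = (c - c') + (z - c) by abel, norm_add_sq_real, hz, inner_add_right,
      real_inner_smul_right, real_inner_smul_right]
  rw [dist_eq_norm, ← sq_le_one_iff₀ (norm_nonneg _), hexp]
  nlinarith [mul_le_mul_of_nonneg_left ix hl, mul_le_mul_of_nonneg_left iy hm,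
    mul_nonneg (sub_nonneg.mpr hlm) (sq_nonneg ‖c - c'‖), pow_le_one₀ (n := 2) (norm_nonneg _) hzc]

theorem closedBall_midpoint_subset_spindle {n : ℕ} {x y : EuclideanSpace ℝ (Fin n)}
    (hxy : dist x y = 2) : Metric.closedBall (midpoint ℝ x y) 1 ⊆ spindle x y := by
  intro z hz
  refine mem_spindle_of_forall hxy.le fun c' hcx hcy => ?_
  have hc' : c' = midpoint ℝ x y := by
    have h := EuclideanGeometry.dist_sq_add_dist_sq_eq_two_mul_dist_midpoint_sq_add_half_dist_sq
      c' x y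
    rw [hxy] at h
    have hx2 := pow_le_one₀ (n := 2) dist_nonneg hcx
    have hy2 := pow_le_one₀ (n := 2) dist_nonneg hcy
    exact dist_le_zero.mp (by nlinarith)
  rwa [hc', ← Metric.mem_closedBall]

theorem sub_add_mem_spindle_of_mem_cone {n : ℕ} {x u w v : EuclideanSpace ℝ (Fin n)}
    {l m : ℝ} (hl : 0 ≤ l) (hm : 0 ≤ m) (hw : ‖w‖ = 1) (hwu : ‖w + u‖ = 1) (hv : ‖v‖ = 1)
    (hvlm : v = l • w + m • (w + u)) : x - w + v ∈ spindle x (x + u) := by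
  have hlm : 1 ≤ l + m := by
    calc 1 = ‖v‖ := hv.symm
      _ ≤ ‖l • w‖ + ‖m • (w + u)‖ := hvlm ▸ norm_add_le _ _
      _ = l + m := by rw [norm_smul, norm_smul, hw, hwu, Real.norm_of_nonneg hl,
        Real.norm_of_nonneg hm, mul_one, mul_one]
  have hyc : x + u - (x - w) = w + u := by abel
  refine mem_spindle_of_sub_eq_smul_add_smul (c := x - w) hl hm hlm ?_ ?_ ?_ ?_
  · rwa [sub_sub_cancel]
  · rwa [hyc]
  · rw [add_sub_cancel_left, sub_sub_cancel, hyc, hvlm]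
  · rw [add_sub_cancel_left, hv]

theorem exists_mem_spindle_inner_pos {n : ℕ} {x y v : EuclideanSpace ℝ (Fin n)}
    (hv : ‖v‖ = 1) (hxy : ⟪v, y - x⟫ ≤ 0) (hy : 1 < dist y (x - v)) :
    ∃ z ∈ spindle x y, 0 < ⟪v, z - x⟫ := by
  obtain ⟨u, rfl⟩ : ∃ u, y = x + u := ⟨y - x, by abel⟩
  rw [add_sub_cancel_left] at hxy
  have huv : 1 < ‖u + v‖ := by rwa [dist_eq_norm, show x + u - (x - v) = u + v by abel] at hy
  have hlow : -‖u‖ ^ 2 / 2 < ⟪v, u⟫ := by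
    rw [← one_lt_sq_iff₀ (norm_nonneg _), norm_add_sq_real, hv, real_inner_comm] at huv
    linarith
  have hdist : dist x (x + u) = ‖u‖ := by rw [dist_comm, dist_eq_norm, add_sub_cancel_left]
  rcases lt_trichotomy ‖u‖ 2 with hlt | heq | hgt
  · obtain ⟨w, l, m, hl, hm, hw, hwu, hvlm⟩ := exists_unit_chord_cone_mem hv
      (by nlinarith [norm_nonneg u]) hlt (abs_le.mpr ⟨by linarith, by linarith [sq_nonneg ‖u‖]⟩)
    have hwv : w ≠ v := by
      rintro rfl
      rw [add_comm, hwu] at huv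
      exact huv.false
    refine ⟨x - w + v, sub_add_mem_spindle_of_mem_cone hl hm hw hwu hv hvlm, ?_⟩
    rw [show x - w + v - x = v - w by abel, inner_sub_right, real_inner_self_eq_norm_sq, hv,
      one_pow, sub_pos, real_inner_comm]
    exact (inner_lt_one_iff_real_of_norm_eq_one hw hv).mpr hwv
  · refine ⟨midpoint ℝ x (x + u) + v, closedBall_midpoint_subset_spindle (hdist.trans heq) ?_, ?_⟩
    · rw [Metric.mem_closedBall, dist_eq_norm, add_sub_cancel_left, hv]
    · rw [add_sub_right_comm, midpoint_sub_left, add_sub_cancel_left, inner_add_right,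
        real_inner_smul_right, real_inner_self_eq_norm_sq, hv]
      rw [heq] at hlow
      norm_num
      linarith
  · refine ⟨x + v, by rw [spindle, if_neg (hdist ▸ hgt.not_ge)]; trivial, ?_⟩
    rw [add_sub_cancel_left, real_inner_self_eq_norm_sq, hv]
    norm_num

theorem spindleConvex_subset_supporting_unit_ball_general (n : ℕ)
    (C : Set (EuclideanSpace ℝ (Fin n))) (hC : SpindleConvex C)
    (x : EuclideanSpace ℝ (Fin n)) (hx : x ∈ C)
    (v : EuclideanSpace ℝ (Fin n)) (hv : ‖v‖ = 1)
    (hsupp : ∀ y ∈ C, (inner ℝ v (y - x) : ℝ) ≤ 0) :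
    C ⊆ Metric.closedBall (x - v) 1 := by
  intro y hy
  rw [Metric.mem_closedBall]
  by_contra! hout
  obtain ⟨z, hz, hpos⟩ := exists_mem_spindle_inner_pos hv (hsupp y hy) hout
  exact (hsupp z (hC x hx y hy hz)).not_gt hpos

theorem spindleConvex_subset_supporting_unit_ball (n : ℕ) (hn : 2 ≤ n)
    (C : Set (EuclideanSpace ℝ (Fin n))) (hC : SpindleConvex C)
    (x : EuclideanSpace ℝ (Fin n)) (hx : x ∈ C)
    (v : EuclideanSpace ℝ (Fin n)) (hv : ‖v‖ = 1)
    (hsupp : ∀ y ∈ C, (inner ℝ v (y - x) : ℝ) ≤ 0) :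
    C ⊆ Metric.closedBall (x - v) 1 :=
  spindleConvex_subset_supporting_unit_ball_general n C hC x hx v hv hsupp
end
end

section
/- Let n ≥ 2 and let C ⊆ ℝⁿ be a nonempty closed spindle convex set. (a) If C is contained in some closed ball of radius 1 but is not contained in any closed ball of radius r < 1, then C is itself a closed unit ball: C = {y : ‖y − q‖ ≤ 1} for some q ∈ ℝⁿ. (b) If C is not contained in any closed ball of radius 1, then C = ℝⁿ. -/
noncomputable section

/-!
Let `q` be the center of a smallest closed ball containing `C`, of radius `R`. Then `q` lies in the
convex hull of the points of `C` on `sphere q R`, since otherwise moving the center slightly would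
shrink the ball. If `C` has diameter at most `2` and `R ≥ 1`, spindle convexity puts into `C` the
shorter great circle arc of `sphere q R` between any two non-antipodal such points. Without
antipodal pairs the directions from `q` towards these points would thus form a convex cone, which
would contain the direction `0` because `q` lies in their convex hull. So some two are antipodal:
`2 * R ≤ 2`, and for `R = 1` the spindle of such a pair is all of `closedBall q 1`. If the diameter
of `C` exceeds `2`, the spindle of a far pair is the whole space.
-/

open Metric Set
open scoped RealInnerProductSpace

theorem isCompact_convexHull {E : Type*} [NormedAddCommGroup E] [NormedSpace ℝ E]
    [FiniteDimensional ℝ E] {s : Set E} (hs : IsCompact s) : IsCompact (convexHull ℝ s) := by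
  let comb (k : ℕ) : (Fin k → ℝ) × (Fin k → E) → E := fun p => ∑ i, p.1 i • p.2 i
  -- Carathéodory: convex combinations of at most `finrank ℝ E + 1` points suffice.
  suffices convexHull ℝ s = ⋃ k ∈ Finset.range (Module.finrank ℝ E + 2),
      comb k '' (stdSimplex ℝ (Fin k) ×ˢ univ.pi fun _ => s) by
    rw [this]
    exact (Finset.range _).isCompact_biUnion fun k _ =>
      ((isCompact_stdSimplex _ _).prod (isCompact_univ_pi fun _ => hs)).image (by fun_prop)
  refine subset_antisymm (fun x hx => ?_) (iUnion₂_subset fun k _ => ?_)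
  · obtain ⟨ι, _, z, w, hzs, hai, hw, hw1, rfl⟩ := eq_pos_convex_span_of_mem_convexHull hx
    have hcard : Fintype.card ι < Module.finrank ℝ E + 2 :=
      Nat.lt_succ_of_le <|
        hai.card_le_finrank_succ.trans (Nat.succ_le_succ (Submodule.finrank_le _))
    let σ := (Fintype.equivFin ι).symm
    refine mem_iUnion₂.2 ⟨_, Finset.mem_range.2 hcard, (w ∘ σ, z ∘ σ),
      ⟨⟨fun i => (hw _).le, hw1 ▸ σ.sum_comp w⟩, fun i _ => hzs (mem_range_self _)⟩,
      σ.sum_comp fun i => w i • z i⟩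
  · rintro _ ⟨⟨w, z⟩, ⟨⟨hw0, hw1⟩, hz⟩, rfl⟩
    exact (convex_convexHull ℝ s).sum_mem (fun i _ => hw0 i) hw1
      fun i _ => subset_convexHull ℝ s (hz i trivial)

theorem IsCompact.exists_lt_forall_dist_le {α : Type*} [PseudoMetricSpace α] {K : Set α}
    (hK : IsCompact K) {q : α} {R : ℝ} (h : ∀ x ∈ K, dist x q < R) :
    ∃ R' < R, ∀ x ∈ K, dist x q ≤ R' := by
  rcases K.eq_empty_or_nonempty with rfl | hne
  · exact ⟨R - 1, by linarith, by simp⟩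
  obtain ⟨x₀, hx₀, hmax⟩ :=
    hK.exists_isMaxOn hne (continuous_id.dist continuous_const).continuousOn
  exact ⟨dist x₀ q, h x₀ hx₀, fun x hx => hmax hx⟩

section InnerProductSpace

variable {E : Type*} [NormedAddCommGroup E] [InnerProductSpace ℝ E]

theorem exists_pos_le_inner_sub_of_notMem_convexHull [FiniteDimensional ℝ E] {T : Set E}
    (hT : IsCompact T) {q : E} (hq : q ∉ convexHull ℝ T) :
    ∃ v : E, ∃ δ > 0, ∀ x ∈ T, δ ≤ ⟪v, x - q⟫ := by
  obtain ⟨f, u, hfq, hfT⟩ := geometric_hahn_banach_point_closed (convex_convexHull ℝ T)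
    (isCompact_convexHull hT).isClosed hq
  refine ⟨(InnerProductSpace.toDual ℝ E).symm f, u - f q, by linarith, fun x hx => ?_⟩
  rw [InnerProductSpace.toDual_symm_apply, map_sub]
  linarith [hfT x (subset_convexHull ℝ T hx)]

/-- The smaller ball is centered at `q + ε • v` for a small `ε > 0`. -/
theorem exists_closedBall_lt_of_le_or_le_inner {C : Set E} {q v : E} {R R' δ : ℝ} (hR : 0 < R)
    (hR' : R' < R) (hδ : 0 < δ) (hC : C ⊆ closedBall q R)
    (h : ∀ x ∈ C, dist x q ≤ R' ∨ δ ≤ ⟪v, x - q⟫) :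
    ∃ c r, r < R ∧ C ⊆ closedBall c r := by
  obtain ⟨ε₁, hε₁, h₁⟩ := exists_pos_mul_lt (sub_pos.2 hR') ‖v‖
  obtain ⟨ε₂, hε₂, h₂⟩ := exists_pos_mul_lt hδ (‖v‖ ^ 2)
  set ε := min ε₁ ε₂
  have hε : 0 < ε := lt_min hε₁ hε₂
  have hεv : ε * ‖v‖ < R - R' := by nlinarith [min_le_left ε₁ ε₂, norm_nonneg v]
  have hεv2 : ε * ‖v‖ ^ 2 ≤ δ := by nlinarith [min_le_right ε₁ ε₂, sq_nonneg ‖v‖]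
  refine ⟨q + ε • v, max (R' + ε * ‖v‖) √(R ^ 2 - ε * δ), max_lt (by linarith) ?_, ?_⟩
  · rw [Real.sqrt_lt' hR]
    nlinarith
  intro x hx
  rw [mem_closedBall]
  rcases h x hx with hnear | hfar
  · refine le_max_of_le_left ?_
    calc dist x (q + ε • v) ≤ dist x q + dist q (q + ε • v) := dist_triangle _ _ _
      _ ≤ R' + ε * ‖v‖ := by
        rw [dist_self_add_right, norm_smul, Real.norm_of_nonneg hε.le]
        linarith
  · refine le_max_of_le_right (Real.le_sqrt_of_sq_le ?_)
    have hxq : ‖x - q‖ ≤ R := by simpa [dist_eq_norm] using hC hx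
    rw [dist_eq_norm, show x - (q + ε • v) = (x - q) - ε • v by abel, norm_sub_sq_real,
      real_inner_smul_right, real_inner_comm, norm_smul, Real.norm_of_nonneg hε.le, mul_pow]
    nlinarith [norm_nonneg (x - q)]

theorem IsCompact.mem_convexHull_inter_sphere [FiniteDimensional ℝ E] {C : Set E}
    (hC : IsCompact C) {q : E} {R : ℝ} (hR : 0 < R) (hsub : C ⊆ closedBall q R)
    (hmin : ∀ c r, r < R → ¬ C ⊆ closedBall c r) :
    q ∈ convexHull ℝ (C ∩ sphere q R) := by
  by_contra hq
  obtain ⟨v, δ, hδ, hv⟩ :=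
    exists_pos_le_inner_sub_of_notMem_convexHull (hC.inter_right isClosed_sphere) hq
  have hK : IsCompact (C ∩ {x | ⟪v, x - q⟫ ≤ δ / 2}) :=
    hC.inter_right (isClosed_le (by fun_prop) continuous_const)
  obtain ⟨R', hR', hnear⟩ := hK.exists_lt_forall_dist_le fun x ⟨hxC, hx⟩ =>
    (hsub hxC).lt_of_ne fun h => by linarith [hv x ⟨hxC, h⟩, show ⟪v, x - q⟫ ≤ δ / 2 from hx]
  obtain ⟨c, r, hr, hCr⟩ := exists_closedBall_lt_of_le_or_le_inner hR hR' (half_pos hδ) hsub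
    fun x hx => (le_or_gt ⟪v, x - q⟫ (δ / 2)).imp (fun h => hnear x ⟨hx, h⟩) le_of_lt
  exact hmin c r hr hCr

end InnerProductSpace

theorem IsCompact.exists_minimal_closedBall {α : Type*} [PseudoMetricSpace α] [ProperSpace α]
    {C : Set α} (hC : IsCompact C) (hne : C.Nonempty) :
    ∃ q R, C ⊆ closedBall q R ∧ ∀ c r, C ⊆ closedBall c r → R ≤ r := by
  obtain ⟨x₀, hx₀⟩ := hne
  let F : α → ℝ := fun c => sSup ((fun x => dist x c) '' C)
  have hF : Continuous F := hC.continuous_sSup (f := fun c x => dist x c) (by fun_prop)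
  have hle : ∀ c, ∀ x ∈ C, dist x c ≤ F c := fun c x hx =>
    le_csSup (hC.image (continuous_id.dist continuous_const)).bddAbove (mem_image_of_mem _ hx)
  have : Nonempty α := ⟨x₀⟩
  obtain ⟨q, hq⟩ := hF.exists_forall_le <|
    Filter.tendsto_atTop_mono (fun c => hle c x₀ hx₀) (tendsto_dist_left_cocompact_atTop x₀)
  refine ⟨q, F q, fun x hx => hle q x hx, fun c r hCr => (hq c).trans ?_⟩
  exact csSup_le ⟨_, mem_image_of_mem _ hx₀⟩ fun _ ⟨x, hx, hxr⟩ => hxr ▸ hCr hx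

theorem eq_midpoint_of_dist_le_one {E : Type*} [NormedAddCommGroup E] [NormedSpace ℝ E]
    [StrictConvexSpace ℝ E] {a b z : E} (hab : dist a b = 2) (ha : dist z a ≤ 1)
    (hb : dist z b ≤ 1) : z = midpoint ℝ a b := by
  have := dist_triangle a z b
  rw [dist_comm] at ha
  exact eq_midpoint_of_dist_eq_half (by linarith) (by linarith)

section Spindle

variable {n : ℕ} {C : Set (EuclideanSpace ℝ (Fin n))} {a b x : EuclideanSpace ℝ (Fin n)}

theorem mem_spindle_iff_s3 (h : dist a b ≤ 2) :
    x ∈ spindle a b ↔ ∀ z, dist z a ≤ 1 → dist z b ≤ 1 → dist x z ≤ 1 := by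
  simp [spindle, h, ballInter, dist_comm x]

theorem spindle_of_two_lt_dist (h : 2 < dist a b) : spindle a b = univ := by
  simp [spindle, h.not_ge]

theorem closedBall_midpoint_subset_spindle_s3 (h : dist a b = 2) :
    closedBall (midpoint ℝ a b) 1 ⊆ spindle a b := fun x hx => by
  rw [mem_spindle_iff_s3 h.le]
  intro z hza hzb
  rwa [eq_midpoint_of_dist_le_one h hza hzb]

theorem SpindleConvex.eq_univ_of_two_lt_dist (hC : SpindleConvex C) (ha : a ∈ C) (hb : b ∈ C)
    (h : 2 < dist a b) : C = univ :=
  eq_univ_of_univ_subset (spindle_of_two_lt_dist h ▸ hC a ha b hb)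

end Spindle

section RadialCone

variable {E : Type*} [NormedAddCommGroup E]

/-- The cone with apex `q` over `C ∩ sphere q R`, translated to the origin. -/
def radialCone [NormedSpace ℝ E] (C : Set E) (q : E) (R : ℝ) : Set E :=
  {v | v ≠ 0 ∧ q + (R / ‖v‖) • v ∈ C}

variable {C : Set E} {q v w : E} {R : ℝ}

theorem smul_mem_radialCone [NormedSpace ℝ E] (hv : v ∈ radialCone C q R) {c : ℝ} (hc : 0 < c) :
    c • v ∈ radialCone C q R := by
  refine ⟨smul_ne_zero hc.ne' hv.1, ?_⟩
  convert hv.2 using 2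
  rw [norm_smul, Real.norm_of_nonneg hc.le, smul_smul]
  congr 1
  field_simp

theorem sub_mem_radialCone [NormedSpace ℝ E] {p : E} (hp : p ∈ C) (hpq : ‖p - q‖ = R)
    (hR : R ≠ 0) : p - q ∈ radialCone C q R := by
  refine ⟨fun h => hR (by simpa [h] using hpq.symm), ?_⟩
  simpa [hpq, hR] using hp

theorem exists_dist_eq_of_neg_mem_radialCone [NormedSpace ℝ E] (hv : v ∈ radialCone C q R)
    (hnv : -v ∈ radialCone C q R) (hR : 0 ≤ R) : ∃ a ∈ C, ∃ b ∈ C, dist a b = 2 * R := by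
  refine ⟨_, hv.2, _, hnv.2, ?_⟩
  rw [dist_add_left, norm_neg, smul_neg, dist_eq_norm, sub_neg_eq_add, ← two_smul ℝ, norm_smul,
    norm_smul, Real.norm_two, Real.norm_of_nonneg (by positivity),
    div_mul_cancel₀ _ (norm_ne_zero_iff.2 hv.1)]

theorem norm_div_norm_smul_add_le_one_iff [InnerProductSpace ℝ E] {y : E} (hv : v ≠ 0)
    (hR : 0 < R) :
    ‖(R / ‖v‖) • v + y‖ ≤ 1 ↔ 2 * R * ⟪v, y⟫ ≤ ‖v‖ * (1 - R ^ 2 - ‖y‖ ^ 2) := by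
  have hv' : 0 < ‖v‖ := norm_pos_iff.2 hv
  have hexp : ‖v‖ * (R ^ 2 + 2 * (R / ‖v‖ * ⟪v, y⟫) + ‖y‖ ^ 2) =
      2 * R * ⟪v, y⟫ + ‖v‖ * (R ^ 2 + ‖y‖ ^ 2) := by
    field_simp
    ring
  rw [← sq_le_one_iff₀ (norm_nonneg _), norm_add_sq_real, real_inner_smul_left, norm_smul,
    Real.norm_of_nonneg (by positivity), div_mul_cancel₀ _ hv'.ne',
    ← mul_le_mul_iff_of_pos_left hv', hexp, mul_one]
  constructor <;> intro h <;> linarith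

/-- The point in direction `v + w` of the sphere of radius `R` lies on the shorter great circle arc
between those in directions `v` and `w`; for `R ≥ 1`, a unit ball containing the ends of such an
arc contains all of it. -/
theorem norm_div_norm_smul_add_le_one [InnerProductSpace ℝ E] {y : E} (hR : 1 ≤ R) (hv : v ≠ 0)
    (hw : w ≠ 0) (hvw : v + w ≠ 0) (hvy : ‖(R / ‖v‖) • v + y‖ ≤ 1)
    (hwy : ‖(R / ‖w‖) • w + y‖ ≤ 1) : ‖(R / ‖v + w‖) • (v + w) + y‖ ≤ 1 := by
  have hR0 : 0 < R := by linarith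
  rw [norm_div_norm_smul_add_le_one_iff hv hR0] at hvy
  rw [norm_div_norm_smul_add_le_one_iff hw hR0] at hwy
  rw [norm_div_norm_smul_add_le_one_iff hvw hR0, inner_add_left]
  have hc : 1 - R ^ 2 - ‖y‖ ^ 2 ≤ 0 := by nlinarith [sq_nonneg ‖y‖]
  nlinarith [norm_add_le v w]

end RadialCone

namespace SpindleConvex

variable {n : ℕ} {C : Set (EuclideanSpace ℝ (Fin n))} {q v w : EuclideanSpace ℝ (Fin n)}
  {R : ℝ}

theorem add_mem_radialCone (hC : SpindleConvex C) (hdiam : ∀ a ∈ C, ∀ b ∈ C, dist a b ≤ 2)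
    (hR : 1 ≤ R) (hv : v ∈ radialCone C q R) (hw : w ∈ radialCone C q R) (hvw : v + w ≠ 0) :
    v + w ∈ radialCone C q R := by
  refine ⟨hvw, hC _ hv.2 _ hw.2 ?_⟩
  have hdist : ∀ u z, dist z (q + u) = ‖u + (q - z)‖ := fun u z => by
    rw [dist_comm, dist_eq_norm]
    congr 1
    abel
  rw [mem_spindle_iff_s3 (hdiam _ hv.2 _ hw.2)]
  intro z hza hzb
  rw [hdist] at hza hzb
  rw [dist_comm, hdist]
  exact norm_div_norm_smul_add_le_one hR hv.1 hw.1 hvw hza hzb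

theorem exists_dist_eq_two_mul (hC : SpindleConvex C) (hdiam : ∀ a ∈ C, ∀ b ∈ C, dist a b ≤ 2)
    (hR : 1 ≤ R) (hq : q ∈ convexHull ℝ (C ∩ sphere q R)) :
    ∃ a ∈ C, ∃ b ∈ C, dist a b = 2 * R := by
  by_contra hno
  let K : ConvexCone ℝ (EuclideanSpace ℝ (Fin n)) :=
    { carrier := radialCone C q R
      smul_mem' := fun _ hc _ hv => smul_mem_radialCone hv hc
      add_mem' := fun v hv w hw => hC.add_mem_radialCone hdiam hR hv hw fun h => hno <|
        exists_dist_eq_of_neg_mem_radialCone hv (neg_eq_of_add_eq_zero_right h ▸ hw)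
          (by linarith) }
  have hsub : C ∩ sphere q R ⊆ (· + -q) ⁻¹' K := fun p ⟨hpC, hpR⟩ => by
    change p + -q ∈ radialCone C q R
    rw [← sub_eq_add_neg]
    exact sub_mem_radialCone hpC (mem_sphere_iff_norm.1 hpR) (by linarith)
  have h0 : q + -q ∈ radialCone C q R :=
    convexHull_min hsub (K.convex.translate_preimage_left (-q)) hq
  exact h0.1 (add_neg_cancel q)

end SpindleConvex

theorem spindleConvex_circumradius_ge_one_general (n : ℕ)
    (C : Set (EuclideanSpace ℝ (Fin n))) (hcl : IsClosed C)
    (hC : SpindleConvex C) :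
    ((∃ c, C ⊆ Metric.closedBall c 1) →
      (∀ c r, r < 1 → ¬ C ⊆ Metric.closedBall c r) →
      ∃ q, C = Metric.closedBall q 1) ∧
    ((¬ ∃ c, C ⊆ Metric.closedBall c 1) → C = Set.univ) := by
  refine ⟨fun ⟨c, hc⟩ hmin => ?_, fun hbig => ?_⟩
  · have hcomp : IsCompact C := (isCompact_closedBall c 1).of_isClosed_subset hcl hc
    have hdiam : ∀ a ∈ C, ∀ b ∈ C, dist a b ≤ 2 := fun a ha b hb =>
      (dist_triangle_right a b c).trans <| by
        linarith [mem_closedBall.1 (hc ha), mem_closedBall.1 (hc hb)]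
    obtain ⟨a, ha, b, hb, hab⟩ := hC.exists_dist_eq_two_mul hdiam le_rfl
      (hcomp.mem_convexHull_inter_sphere one_pos hc hmin)
    rw [mul_one] at hab
    have hcm : c = midpoint ℝ a b :=
      eq_midpoint_of_dist_le_one hab (dist_comm a c ▸ hc ha) (dist_comm b c ▸ hc hb)
    exact ⟨c, hc.antisymm (hcm ▸ (closedBall_midpoint_subset_spindle_s3 hab).trans (hC a ha b hb))⟩
  · by_contra hne
    have hdiam : ∀ a ∈ C, ∀ b ∈ C, dist a b ≤ 2 := fun a ha b hb =>
      not_lt.1 fun h => hne (hC.eq_univ_of_two_lt_dist ha hb h)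
    obtain ⟨x₀, hx₀⟩ : C.Nonempty :=
      nonempty_iff_ne_empty.2 fun h => hbig ⟨0, h ▸ empty_subset _⟩
    have hcomp : IsCompact C :=
      (isCompact_closedBall x₀ 2).of_isClosed_subset hcl fun x hx => hdiam x hx x₀ hx₀
    obtain ⟨q, R, hq, hmin⟩ := hcomp.exists_minimal_closedBall ⟨x₀, hx₀⟩
    have hR : 1 < R := not_le.1 fun h => hbig ⟨q, hq.trans (closedBall_subset_closedBall h)⟩
    obtain ⟨a, ha, b, hb, hab⟩ := hC.exists_dist_eq_two_mul hdiam hR.le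
      (hcomp.mem_convexHull_inter_sphere (by linarith) hq fun c r hr hCr =>
        (hmin c r hCr).not_gt hr)
    linarith [hdiam a ha b hb]

theorem spindleConvex_circumradius_ge_one (n : ℕ) (hn : 2 ≤ n)
    (C : Set (EuclideanSpace ℝ (Fin n))) (hne : C.Nonempty) (hcl : IsClosed C)
    (hC : SpindleConvex C) :
    ((∃ c, C ⊆ Metric.closedBall c 1) →
      (∀ c r, r < 1 → ¬ C ⊆ Metric.closedBall c r) →
      ∃ q, C = Metric.closedBall q 1) ∧
    ((¬ ∃ c, C ⊆ Metric.closedBall c 1) → C = Set.univ) :=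
  spindleConvex_circumradius_ge_one_general n C hcl hC
end
end

section
/- Let A, B ⊆ ℝⁿ be finite sets such that the unit sphere centered at the origin is the smallest sphere separating A from B with A inside; precisely: A ⊆ {y : ‖y‖ ≤ 1}, B is disjoint from {y : ‖y‖ < 1}, and for every c ∈ ℝⁿ and r > 0, if A ⊆ {y : ‖y − c‖ ≤ r} and B is disjoint from {y : ‖y − c‖ < r}, then r ≥ 1. Then there exists a subset T ⊆ A ∪ B with card T ≤ n + 1 such that for every c ∈ ℝⁿ and r > 0, if T ∩ A ⊆ {y : ‖y − c‖ ≤ r} and T ∩ B is disjoint from {y : ‖y − c‖ < r}, then r ≥ 1 (i.e., the unit sphere centered at the origin is also the smallest sphere separating T ∩ A from T ∩ B with T ∩ A inside). -/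
noncomputable section

open RealInnerProductSpace Metric Set

/-- If `A` is contained in a single point, the minimality hypothesis fails. -/
lemma aux_singleton_case {n : ℕ} {A B : Set (EuclideanSpace ℝ (Fin n))} (hB : B.Finite)
    (hBout : Disjoint B (Metric.ball 0 1))
    (c₀ : EuclideanSpace ℝ (Fin n)) (hAc : A ⊆ {c₀})
    (hmin : ∀ (c : EuclideanSpace ℝ (Fin n)) (r : ℝ), 0 < r →
      A ⊆ Metric.closedBall c r → Disjoint B (Metric.ball c r) → 1 ≤ r) : False := by
  classical
  rcases Nat.eq_zero_or_pos n with h0 | hn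
  · subst h0
    have hBe : B = ∅ := by
      ext b
      simp only [Set.mem_empty_iff_false, iff_false]
      intro hb
      have : b ∈ Metric.ball (0 : EuclideanSpace ℝ (Fin 0)) 1 := by
        have : b = 0 := Subsingleton.elim _ _
        simp [this]
      exact (Set.disjoint_left.1 hBout) hb this
    have := hmin c₀ (1/2) (by norm_num)
      (fun a ha => by simp [Subsingleton.elim a c₀, Metric.mem_closedBall]) (by simp [hBe])
    linarith
  · -- pick a unit vector
    set u : EuclideanSpace ℝ (Fin n) := EuclideanSpace.single (⟨0, hn⟩ : Fin n) (1:ℝ) with hu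
    have hnu : ‖u‖ = 1 := by simp [hu]
    -- minimal positive distance from B to c₀
    set D : Finset (EuclideanSpace ℝ (Fin n)) := hB.toFinset.filter (fun b => b ≠ c₀) with hD
    obtain ⟨δ, hδpos, hδ⟩ : ∃ δ : ℝ, 0 < δ ∧ ∀ b ∈ B, b ≠ c₀ → δ ≤ dist b c₀ := by
      by_cases hDe : D.Nonempty
      · refine ⟨D.inf' hDe (fun b => dist b c₀), ?_, ?_⟩
        · rw [Finset.lt_inf'_iff]
          intro b hb
          rw [hD, Finset.mem_filter] at hb
          exact dist_pos.2 hb.2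
        · intro b hbB hbne
          exact Finset.inf'_le _ (by rw [hD, Finset.mem_filter]; exact ⟨hB.mem_toFinset.2 hbB, hbne⟩)
      · exact ⟨1, one_pos, fun b hbB hbne => absurd ⟨b, by
          rw [hD, Finset.mem_filter]; exact ⟨hB.mem_toFinset.2 hbB, hbne⟩⟩ hDe⟩
    set ε : ℝ := min (δ/2) (1/2) with hε
    have hεpos : 0 < ε := lt_min (by linarith) (by norm_num)
    have hεδ : ε ≤ δ/2 := min_le_left _ _
    have hεhalf : ε ≤ 1/2 := min_le_right _ _
    have h1 : A ⊆ Metric.closedBall (c₀ + ε • u) ε := by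
      intro a ha
      have : a = c₀ := hAc ha
      rw [Metric.mem_closedBall, this, dist_self_add_right, norm_smul, hnu]
      simp [abs_of_pos hεpos]
    have h2 : Disjoint B (Metric.ball (c₀ + ε • u) ε) := by
      rw [Set.disjoint_left]
      intro b hbB hball
      rw [Metric.mem_ball] at hball
      by_cases hbc : b = c₀
      · rw [hbc, dist_self_add_right, norm_smul, hnu] at hball
        simp [abs_of_pos hεpos] at hball
      · have hd := hδ b hbB hbc
        have : dist b c₀ ≤ dist b (c₀ + ε • u) + dist (c₀ + ε • u) c₀ := dist_triangle _ _ _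
        rw [dist_comm (c₀ + ε • u) c₀, dist_self_add_right, norm_smul, hnu] at this
        simp only [Real.norm_eq_abs, abs_of_pos hεpos, mul_one] at this
        linarith
    have := hmin _ ε hεpos h1 h2
    linarith


lemma aux_sqrt_case {n : ℕ} {q : ℝ} (hq0 : 0 < q) (hq1 : q < 1)
    {A B : Set (EuclideanSpace ℝ (Fin n))} (c : EuclideanSpace ℝ (Fin n))
    (hPA : ∀ a ∈ A, ‖a - c‖^2 ≤ q) (hPB : ∀ b ∈ B, q ≤ ‖b - c‖^2)
    (hmin : ∀ (c : EuclideanSpace ℝ (Fin n)) (r : ℝ), 0 < r →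
      A ⊆ Metric.closedBall c r → Disjoint B (Metric.ball c r) → 1 ≤ r) : False := by
  have hrpos : 0 < Real.sqrt q := Real.sqrt_pos.2 hq0
  have h1 : A ⊆ Metric.closedBall c (Real.sqrt q) := by
    intro a haA
    rw [Metric.mem_closedBall, dist_eq_norm]
    exact (Real.le_sqrt (norm_nonneg _) hq0.le).2 (hPA a haA)
  have h2 : Disjoint B (Metric.ball c (Real.sqrt q)) := by
    rw [Set.disjoint_left]
    intro b hbB hball
    rw [Metric.mem_ball, dist_eq_norm] at hball
    have : Real.sqrt q ≤ ‖b - c‖ := by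
      have := Real.sqrt_le_sqrt (hPB b hbB)
      rwa [Real.sqrt_sq (norm_nonneg _)] at this
    linarith
  have h3 := hmin c (Real.sqrt q) hrpos h1 h2
  have h4 : Real.sqrt q < 1 := by
    rw [show (1:ℝ) = Real.sqrt 1 by simp]
    exact Real.sqrt_lt_sqrt hq0.le hq1
  linarith

set_option maxHeartbeats 1000000 in
theorem smallest_separating_sphere_finite_subset (n : ℕ)
    (A B : Set (EuclideanSpace ℝ (Fin n))) (hA : A.Finite) (hB : B.Finite)
    (hAin : A ⊆ Metric.closedBall 0 1) (hBout : Disjoint B (Metric.ball 0 1))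
    (hmin : ∀ (c : EuclideanSpace ℝ (Fin n)) (r : ℝ), 0 < r →
      A ⊆ Metric.closedBall c r → Disjoint B (Metric.ball c r) → 1 ≤ r) :
    ∃ T : Set (EuclideanSpace ℝ (Fin n)), T ⊆ A ∪ B ∧ T.ncard ≤ n + 1 ∧
      ∀ (c : EuclideanSpace ℝ (Fin n)) (r : ℝ), 0 < r →
        T ∩ A ⊆ Metric.closedBall c r → Disjoint (T ∩ B) (Metric.ball c r) → 1 ≤ r := by
  classical
  by_contra hcon
  push_neg at hcon
  -- hcon : ∀ T ⊆ A∪B, ncard ≤ n+1 → ∃ c r, 0<r ∧ inside ∧ outside ∧ r < 1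
  set V : EuclideanSpace ℝ (Fin n) → ℝ := fun y => ‖y‖^2 with hV
  set F : Option (EuclideanSpace ℝ (Fin n)) → Set (EuclideanSpace ℝ (Fin n) × ℝ) :=
    fun o => o.elim {p | p.2 + ‖p.1‖^2 < 1}
      (fun y => {p | (y ∈ A → ‖y‖^2 ≤ 2 * ⟪y, p.1⟫ + p.2) ∧
                     (y ∈ B → 2 * ⟪y, p.1⟫ + p.2 ≤ ‖y‖^2)}) with hF
  set s : Finset (Option (EuclideanSpace ℝ (Fin n))) :=
    insert none ((hA.union hB).toFinset.image some) with hs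
  have hrank : Module.finrank ℝ (EuclideanSpace ℝ (Fin n) × ℝ) = n + 1 := by
    simp [Module.finrank_prod]
  have hmemA : ∀ y ∈ A ∪ B, some y ∈ s := by
    intro y hy
    rw [hs]
    exact Finset.mem_insert_of_mem (Finset.mem_image_of_mem some ((hA.union hB).mem_toFinset.2 hy))
  -- convexity
  have hconv : ∀ i ∈ s, Convex ℝ (F i) := by
    rintro (_ | y) _
    · rintro p hp q hq a b ha hb hab
      simp only [hF, Option.elim, Set.mem_setOf_eq] at hp hq ⊢
      have h1 : ‖a • p.1 + b • q.1‖ ≤ a * ‖p.1‖ + b * ‖q.1‖ := by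
        calc ‖a • p.1 + b • q.1‖ ≤ ‖a • p.1‖ + ‖b • q.1‖ := norm_add_le _ _
        _ = a * ‖p.1‖ + b * ‖q.1‖ := by
            rw [norm_smul, norm_smul, Real.norm_eq_abs, Real.norm_eq_abs,
              abs_of_nonneg ha, abs_of_nonneg hb]
      have h2 : ‖a • p.1 + b • q.1‖^2 ≤ (a * ‖p.1‖ + b * ‖q.1‖)^2 :=
        pow_le_pow_left₀ (norm_nonneg _) h1 2
      have h3 : (a • p + b • q).2 + ‖(a • p + b • q).1‖^2
          ≤ a * (p.2 + ‖p.1‖^2) + b * (q.2 + ‖q.1‖^2) := by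
        have hfst : (a • p + b • q).1 = a • p.1 + b • q.1 := rfl
        have hsnd : (a • p + b • q).2 = a * p.2 + b * q.2 := rfl
        rw [hfst, hsnd]
        nlinarith [sq_nonneg (‖p.1‖ - ‖q.1‖), mul_nonneg ha hb, norm_nonneg p.1, norm_nonneg q.1]
      have h4 : a * (p.2 + ‖p.1‖^2) + b * (q.2 + ‖q.1‖^2) < 1 := by
        rcases ha.lt_or_eq with ha' | ha'
        · nlinarith
        · rw [← ha'] at hab ⊢; nlinarith
      exact lt_of_le_of_lt h3 h4
    · rintro p hp q hq a b ha hb hab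
      simp only [hF, Option.elim, Set.mem_setOf_eq] at hp hq ⊢
      have hfst : (a • p + b • q).1 = a • p.1 + b • q.1 := rfl
      have hsnd : (a • p + b • q).2 = a * p.2 + b * q.2 := rfl
      have hin : ⟪y, (a • p + b • q).1⟫ = a * ⟪y, p.1⟫ + b * ⟪y, q.1⟫ := by
        rw [hfst, inner_add_right, real_inner_smul_right, real_inner_smul_right]
      constructor
      · intro hyA
        have h1 := hp.1 hyA
        have h2 := hq.1 hyA
        rw [hin, hsnd]
        nlinarith
      · intro hyB
        have h1 := hp.2 hyB
        have h2 := hq.2 hyB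
        rw [hin, hsnd]
        nlinarith
  -- intersections of small subfamilies
  have hinter : ∀ I ⊆ s, I.card ≤ Module.finrank ℝ (EuclideanSpace ℝ (Fin n) × ℝ) + 1 →
      (⋂ i ∈ I, F i).Nonempty := by
    intro I hIs hIcard
    rw [hrank] at hIcard
    by_cases hnone : none ∈ I
    · -- use the failure hypothesis
      set J : Finset (EuclideanSpace ℝ (Fin n)) :=
        I.preimage some (Set.injOn_of_injective (Option.some_injective _)) with hJ
      have hJmem : ∀ y, y ∈ J ↔ some y ∈ I := fun y => Finset.mem_preimage
      have hTsub : (↑J : Set (EuclideanSpace ℝ (Fin n))) ⊆ A ∪ B := by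
        intro y hy
        have : some y ∈ s := hIs ((hJmem y).1 hy)
        rw [hs] at this
        rcases Finset.mem_insert.1 this with h | h
        · exact absurd h (by simp)
        · obtain ⟨z, hz, hzy⟩ := Finset.mem_image.1 h
          rw [← Option.some_injective _ hzy]
          exact (hA.union hB).mem_toFinset.1 hz
      have hTcard : (↑J : Set (EuclideanSpace ℝ (Fin n))).ncard ≤ n + 1 := by
        rw [Set.ncard_coe_finset]
        have h1 : J.image some ⊆ I.erase none := by
          intro o ho
          obtain ⟨y, hy, rfl⟩ := Finset.mem_image.1 ho
          exact Finset.mem_erase.2 ⟨by simp, (hJmem y).1 hy⟩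
        have h2 : J.card = (J.image some).card :=
          (Finset.card_image_of_injective _ (Option.some_injective _)).symm
        have h3 := Finset.card_le_card h1
        have h4 := Finset.card_erase_of_mem hnone
        omega
      obtain ⟨c, r, hr, hsub, hdisj, hrlt⟩ := hcon (↑J) hTsub hTcard
      refine ⟨(c, r^2 - ‖c‖^2), ?_⟩
      rw [Set.mem_iInter₂]
      rintro (_ | y) hi
      · simp only [hF, Option.elim, Set.mem_setOf_eq]
        nlinarith
      · simp only [hF, Option.elim, Set.mem_setOf_eq]
        have hyJ : y ∈ J := (hJmem y).2 hi
        constructor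
        · intro hyA
          have hmem : y ∈ (↑J : Set _) ∩ A := ⟨hyJ, hyA⟩
          have := hsub hmem
          rw [Metric.mem_closedBall, dist_eq_norm] at this
          have h5 : ‖y - c‖^2 ≤ r^2 := by nlinarith [norm_nonneg (y - c)]
          rw [norm_sub_sq_real] at h5
          linarith
        · intro hyB
          have hmem : y ∈ (↑J : Set _) ∩ B := ⟨hyJ, hyB⟩
          have hnb := Set.disjoint_left.1 hdisj hmem
          rw [Metric.mem_ball, not_lt, dist_eq_norm] at hnb
          have h5 : r^2 ≤ ‖y - c‖^2 := by nlinarith [norm_nonneg (y - c)]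
          rw [norm_sub_sq_real] at h5
          linarith
    · -- (0,1) works
      refine ⟨((0 : EuclideanSpace ℝ (Fin n)), 1), ?_⟩
      rw [Set.mem_iInter₂]
      rintro (_ | y) hi
      · exact absurd hi hnone
      · simp only [hF, Option.elim, Set.mem_setOf_eq]
        constructor
        · intro hyA
          have := hAin hyA
          rw [Metric.mem_closedBall, dist_zero_right] at this
          rw [inner_zero_right]
          nlinarith [norm_nonneg y]
        · intro hyB
          have := Set.disjoint_left.1 hBout hyB
          rw [Metric.mem_ball, dist_zero_right, not_lt] at this
          rw [inner_zero_right]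
          nlinarith
  -- apply Helly
  obtain ⟨p, hp⟩ := Convex.helly_theorem' (𝕜 := ℝ) hconv hinter
  rw [Set.mem_iInter₂] at hp
  have hnone : p.2 + ‖p.1‖^2 < 1 := by
    have := hp none (by rw [hs]; exact Finset.mem_insert_self _ _)
    simpa [hF] using this
  obtain ⟨q, hqdef⟩ : ∃ q : ℝ, q = p.2 + ‖p.1‖^2 := ⟨_, rfl⟩
  have hq1 : q < 1 := by rw [hqdef]; exact hnone
  have hPA : ∀ a ∈ A, ‖a - p.1‖^2 ≤ q := by
    intro a haA
    have := (hp (some a) (hmemA a (Or.inl haA))).1 haA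
    rw [norm_sub_sq_real, hqdef]
    linarith
  have hPB : ∀ b ∈ B, q ≤ ‖b - p.1‖^2 := by
    intro b hbB
    have := (hp (some b) (hmemA b (Or.inr hbB))).2 hbB
    rw [norm_sub_sq_real, hqdef]
    linarith
  clear hp hnone hqdef hconv hinter hcon hmemA
  rcases le_or_gt q 0 with hq0 | hq0
  · refine aux_singleton_case hB hBout p.1 (fun a haA => ?_) hmin
    have h1 := hPA a haA
    have h2 : ‖a - p.1‖ = 0 := by nlinarith [norm_nonneg (a - p.1)]
    have h3 : a - p.1 = 0 := norm_eq_zero.1 h2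
    simpa [Set.mem_singleton_iff] using sub_eq_zero.1 h3
  · exact aux_sqrt_case hq0 hq1 p.1 hPA hPB hmin
end
end

section
/- Let A, B ⊆ ℝⁿ be finite sets. Then A and B can be strictly separated by a sphere of radius at most 1 with A inside — i.e., there exist c ∈ ℝⁿ and 0 < r ≤ 1 with A ⊆ {y : ‖y − c‖ < r} and B disjoint from {y : ‖y − c‖ ≤ r} — if and only if for every subset T ⊆ A ∪ B with card T ≤ n + 2 there exist c_T ∈ ℝⁿ and 0 < r_T ≤ 1 with T ∩ A ⊆ {y : ‖y − c_T‖ < r_T} and T ∩ B disjoint from {y : ‖y − c_T‖ ≤ r_T}. -/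
noncomputable section

/-!
Encode the sphere with center `c` and radius `r` by the point `(c, ‖c‖² - r²)` of `ℝⁿ × ℝ`.
The power `‖x - c‖² - r²` of a point `x` is affine in this encoding, so "`x` lies strictly
inside" and "`x` lies strictly outside" become open half-spaces, and "`r ≤ 1`" becomes the
convex region `‖c‖² - t ≤ 1`. Every `n + 2` of these convex sets in the `(n + 1)`-dimensional
space meet by hypothesis, hence all of them meet by Helly's theorem. When `A` is empty,
a unit ball far away from `B` does the job.
-/

open Metric Set Module

section Metric

variable {X : Type*} [PseudoMetricSpace X]

def BallSeparable (ρ : ℝ) (A B : Set X) : Prop :=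
  ∃ (c : X) (r : ℝ), 0 < r ∧ r ≤ ρ ∧ A ⊆ ball c r ∧ Disjoint B (closedBall c r)

theorem BallSeparable.mono {ρ : ℝ} {A A' B B' : Set X} (h : BallSeparable ρ A B)
    (hA : A' ⊆ A) (hB : B' ⊆ B) : BallSeparable ρ A' B' :=
  let ⟨c, r, hr, hrρ, hAc, hBc⟩ := h
  ⟨c, r, hr, hrρ, hA.trans hAc, hBc.mono_left hB⟩

end Metric

theorem ballSeparable_empty_left {E : Type*} [NormedAddCommGroup E] [NormedSpace ℝ E]
    [Nontrivial E] {ρ : ℝ} (hρ : 0 < ρ) {B : Set E} (hB : Bornology.IsBounded B) :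
    BallSeparable ρ ∅ B := by
  obtain ⟨R, hR⟩ := hB.subset_closedBall 0
  obtain ⟨c, hc⟩ := exists_norm_eq E (by positivity : 0 ≤ |R| + ρ + 1)
  refine ⟨c, ρ, hρ, le_rfl, empty_subset _, disjoint_left.2 fun b hb hbc => ?_⟩
  have hbR : ‖b‖ ≤ R := by simpa using hR hb
  have hcb : ‖c - b‖ ≤ ρ := by simpa [dist_eq_norm'] using hbc
  linarith [norm_sub_norm_le c b, le_abs_self R]

section InnerProductSpace

variable {E : Type*} [NormedAddCommGroup E] [InnerProductSpace ℝ E]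

/-- The power `‖x - c‖² - r²` of `x` with respect to the sphere encoded by `(c, ‖c‖² - r²)`. -/
def spherePower (x : E) : E × ℝ →ᵃ[ℝ] ℝ :=
  (((-2 : ℝ) • innerₛₗ ℝ x).coprod LinearMap.id).toAffineMap +
    AffineMap.const ℝ (E × ℝ) (‖x‖ ^ 2)

theorem spherePower_apply (x : E) (p : E × ℝ) :
    spherePower x p = ‖x - p.1‖ ^ 2 - (‖p.1‖ ^ 2 - p.2) := by
  simp only [spherePower, neg_smul, AffineMap.coe_add, LinearMap.coe_toAffineMap,
    AffineMap.coe_const, Pi.add_apply, LinearMap.coprod_apply, LinearMap.neg_apply,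
    LinearMap.smul_apply, innerₛₗ_apply_apply, smul_eq_mul, LinearMap.id_coe, id_eq,
    Function.const_apply, norm_sub_sq_real]
  ring

theorem convex_setOf_norm_sq_sub_le (k : ℝ) :
    Convex ℝ {p : E × ℝ | ‖p.1‖ ^ 2 - p.2 ≤ k} := by
  have hf : ConvexOn ℝ univ (fun x : E => ‖x‖ ^ 2 + -k) :=
    ((convexOn_univ_norm (E := E)).pow (fun x _ => norm_nonneg x) 2).add_const (-k)
  have h := hf.convex_epigraph
  simp only [mem_univ, true_and] at h
  convert h using 3 with p
  constructor <;> intro <;> linarith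

/-- In the encoding of `spherePower`: `.inl a` gives the spheres of radius at most `ρ`
having `a` strictly inside, `.inr b` those having `b` strictly outside. -/
def liftedConstraint (ρ : ℝ) : E ⊕ E → Set (E × ℝ) :=
  Sum.elim (fun a => {p | ‖p.1‖ ^ 2 - p.2 ≤ ρ ^ 2} ∩ spherePower a ⁻¹' Iio 0)
    (fun b => {p | ‖p.1‖ ^ 2 - p.2 ≤ ρ ^ 2} ∩ spherePower b ⁻¹' Ioi 0)

theorem convex_liftedConstraint (ρ : ℝ) (i : E ⊕ E) : Convex ℝ (liftedConstraint ρ i) := by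
  rcases i with a | b
  exacts [(convex_setOf_norm_sq_sub_le _).inter ((convex_Iio 0).affine_preimage _),
    (convex_setOf_norm_sq_sub_le _).inter ((convex_Ioi 0).affine_preimage _)]

theorem BallSeparable.exists_mem_liftedConstraint {ρ : ℝ} {A B : Set E}
    (h : BallSeparable ρ A B) : ∃ p : E × ℝ,
      (∀ a ∈ A, p ∈ liftedConstraint ρ (.inl a)) ∧ ∀ b ∈ B, p ∈ liftedConstraint ρ (.inr b) := by
  obtain ⟨c, r, hr, hrρ, hAc, hBc⟩ := h
  have hR : ‖c‖ ^ 2 - (‖c‖ ^ 2 - r ^ 2) ≤ ρ ^ 2 := by nlinarith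
  refine ⟨(c, ‖c‖ ^ 2 - r ^ 2), fun a ha => ⟨hR, ?_⟩, fun b hb => ⟨hR, ?_⟩⟩
  · have : ‖a - c‖ < r := by simpa [dist_eq_norm] using hAc ha
    simp only [mem_preimage, mem_Iio, spherePower_apply, sub_sub_cancel, sub_neg]
    exact pow_lt_pow_left₀ this (norm_nonneg _) two_ne_zero
  · have : r < ‖b - c‖ := by simpa [dist_eq_norm] using disjoint_left.1 hBc hb
    simp only [mem_preimage, mem_Ioi, spherePower_apply, sub_sub_cancel, sub_pos]
    exact pow_lt_pow_left₀ this hr.le two_ne_zero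

theorem ballSeparable_of_mem_liftedConstraint {ρ : ℝ} (hρ : 0 ≤ ρ) {A B : Set E}
    (hA : A.Nonempty) (p : E × ℝ) (hpA : ∀ a ∈ A, p ∈ liftedConstraint ρ (.inl a))
    (hpB : ∀ b ∈ B, p ∈ liftedConstraint ρ (.inr b)) : BallSeparable ρ A B := by
  simp only [liftedConstraint, Sum.elim_inl, Sum.elim_inr, mem_inter_iff, mem_ofPred_eq,
    mem_preimage, mem_Iio, mem_Ioi, spherePower_apply, sub_neg, sub_pos] at hpA hpB
  obtain ⟨a₀, ha₀⟩ := hA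
  have hr : 0 < ‖p.1‖ ^ 2 - p.2 := (sq_nonneg _).trans_lt (hpA a₀ ha₀).2
  refine ⟨p.1, √(‖p.1‖ ^ 2 - p.2), Real.sqrt_pos.2 hr, (Real.sqrt_le_left hρ).2 (hpA a₀ ha₀).1,
    fun a ha => ?_, disjoint_left.2 fun b hb hbc => ?_⟩
  · rw [mem_ball, dist_eq_norm, Real.lt_sqrt (norm_nonneg _)]
    exact (hpA a ha).2
  · rw [mem_closedBall, dist_eq_norm, Real.le_sqrt (norm_nonneg _) hr.le] at hbc
    exact (hpB b hb).2.not_ge hbc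

theorem ballSeparable_of_forall_ncard_le_of_nonempty [FiniteDimensional ℝ E] {ρ : ℝ}
    (hρ : 0 ≤ ρ) {A B : Set E} (hA : A.Finite) (hB : B.Finite) (hA₀ : A.Nonempty)
    (h : ∀ T ⊆ A ∪ B, T.ncard ≤ finrank ℝ E + 2 → BallSeparable ρ (T ∩ A) (T ∩ B)) :
    BallSeparable ρ A B := by
  classical
  have hsub : ∀ I ⊆ hA.toFinset.disjSum hB.toFinset,
      I.card ≤ finrank ℝ (E × ℝ) + 1 → (⋂ i ∈ I, liftedConstraint ρ i).Nonempty := by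
    intro I hI hcard
    have hIA : ∀ a, .inl a ∈ I → a ∈ A := fun a hi => by simpa using hI hi
    have hIB : ∀ b, .inr b ∈ I → b ∈ B := fun b hi => by simpa using hI hi
    have hT : (I.image (Sum.elim id id) : Set E) ⊆ A ∪ B := by
      intro x hx
      obtain ⟨(a | b), hi, rfl⟩ := Finset.mem_image.1 hx
      exacts [.inl (hIA a hi), .inr (hIB b hi)]
    have hTcard : (I.image (Sum.elim id id) : Set E).ncard ≤ finrank ℝ E + 2 := by
      rw [ncard_coe_finset]
      exact Finset.card_image_le.trans (by simpa [finrank_prod] using hcard)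
    obtain ⟨p, hpA, hpB⟩ := (h _ hT hTcard).exists_mem_liftedConstraint
    refine ⟨p, mem_iInter₂.2 ?_⟩
    rintro (a | b) hi
    · exact hpA a ⟨Finset.mem_image_of_mem _ hi, hIA a hi⟩
    · exact hpB b ⟨Finset.mem_image_of_mem _ hi, hIB b hi⟩
  obtain ⟨p, hp⟩ := Convex.helly_theorem' (fun i _ => convex_liftedConstraint ρ i) hsub
  have hpI := mem_iInter₂.1 hp
  exact ballSeparable_of_mem_liftedConstraint hρ hA₀ p (fun a ha => hpI (.inl a) (by simpa))
    (fun b hb => hpI (.inr b) (by simpa))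

theorem ballSeparable_of_forall_ncard_le [FiniteDimensional ℝ E] {ρ : ℝ} (hρ : 0 < ρ)
    {A B : Set E} (hA : A.Finite) (hB : B.Finite)
    (h : ∀ T ⊆ A ∪ B, T.ncard ≤ finrank ℝ E + 2 → BallSeparable ρ (T ∩ A) (T ∩ B)) :
    BallSeparable ρ A B := by
  rcases subsingleton_or_nontrivial E with _ | _
  · have := h (A ∪ B) subset_rfl ((ncard_le_one_of_subsingleton _).trans (by omega))
    rwa [union_inter_cancel_left, union_inter_cancel_right] at this
  rcases A.eq_empty_or_nonempty with rfl | hA₀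
  · exact ballSeparable_empty_left hρ hB.isBounded
  · exact ballSeparable_of_forall_ncard_le_of_nonempty hρ.le hA hB hA₀ h

end InnerProductSpace

theorem kirchberger_for_spheres_of_radius_le_one (n : ℕ)
    (A B : Set (EuclideanSpace ℝ (Fin n))) (hA : A.Finite) (hB : B.Finite) :
    (∃ (c : EuclideanSpace ℝ (Fin n)) (r : ℝ), 0 < r ∧ r ≤ 1 ∧
        A ⊆ Metric.ball c r ∧ Disjoint B (Metric.closedBall c r)) ↔
      ∀ T : Set (EuclideanSpace ℝ (Fin n)), T ⊆ A ∪ B → T.ncard ≤ n + 2 →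
        ∃ (c : EuclideanSpace ℝ (Fin n)) (r : ℝ), 0 < r ∧ r ≤ 1 ∧
          T ∩ A ⊆ Metric.ball c r ∧ Disjoint (T ∩ B) (Metric.closedBall c r) := by
  refine ⟨fun h T _ _ => BallSeparable.mono h inter_subset_right inter_subset_right,
    fun h => ?_⟩
  refine ballSeparable_of_forall_ncard_le one_pos hA hB fun T hT hTcard => ?_
  exact h T hT (by rwa [finrank_euclideanSpace_fin] at hTcard)
end
end

section
/- Let n ≥ 2 and let X ⊆ ℝⁿ be a closed set of circumradius less than 1, i.e. X ⊆ {y : ‖y − p‖ ≤ r} for some p ∈ ℝⁿ and r < 1. Let q ∈ ℝⁿ be such that X ⊆ {y : ‖y − q‖ ≤ 1}. Then: (i) X ∩ S, where S = {y : ‖y − q‖ = 1}, is contained in an open hemisphere of S, i.e. there is a unit vector v with ⟨v, x − q⟩ > 0 for all x ∈ X ∩ S; (ii) conv_s(X) ∩ S equals the spherical convex hull of X ∩ S in S, which can be expressed radially: conv_s(X) ∩ S = {x ∈ S : there exists t with 0 < t ≤ 1 such that q + t(x − q) lies in the (linear) convex hull of X ∩ S}. -/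
noncomputable section

/-!
For (i): a point of `X ∩ S` lies within `r < 1` of `p` and at distance `1` from `q`, hence strictly
on the side of `p` of the hyperplane through `q` orthogonal to `p - q`.

For (ii), let `R` be the right-hand side. A spindle convex `C ⊇ X` contains `R`, because the cone
with apex `q` over `C ∩ S` is convex: the short great-circle arc between two points of `S` lies in
their spindle. Conversely `B(q, 1) ∪ R` is spindle convex. If `x ∈ S \ R` were in the spindle of two
of its points `a, b`, a hyperplane through `q` would separate the ray from `q` through `x` from the
points where the rays through those of `a, b` on `S` meet `conv (X ∩ S)`; moving the centre `q` a
little along the normal of that hyperplane gives a unit ball containing `a` and `b` but not `x`.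
-/

open Metric Set Filter Topology RealInnerProductSpace

section InnerProductSpace

variable {E : Type*} [NormedAddCommGroup E] [InnerProductSpace ℝ E]

lemma inner_sub_pos_of_mem_closedBall_of_mem_sphere {p q x : E} {r : ℝ} (hr : r < 1)
    (hxp : x ∈ closedBall p r) (hxq : x ∈ sphere q 1) : 0 < ⟪p - q, x - q⟫ := by
  rw [mem_closedBall, dist_eq_norm] at hxp
  rw [mem_sphere, dist_eq_norm] at hxq
  have h := norm_sub_sq_real (x - q) (p - q)
  rw [show x - q - (p - q) = x - p by abel, hxq, real_inner_comm] at h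
  nlinarith [norm_nonneg (x - p), norm_nonneg (p - q)]

lemma exists_norm_eq_one_inner_pos [Nontrivial E] (w : E) :
    ∃ v : E, ‖v‖ = 1 ∧ ∀ y : E, 0 < ⟪w, y⟫ → 0 < ⟪v, y⟫ := by
  rcases eq_or_ne w 0 with rfl | hw
  · obtain ⟨v, hv⟩ := exists_norm_eq E zero_le_one
    exact ⟨v, hv, fun y hy => by simp at hy⟩
  · refine ⟨‖w‖⁻¹ • w, norm_smul_inv_norm hw, fun y hy => ?_⟩
    rw [real_inner_smul_left]
    exact mul_pos (inv_pos.2 (norm_pos_iff.2 hw)) hy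

lemma notMem_convexHull_of_inner_sub_pos {s : Set E} {q w : E}
    (h : ∀ y ∈ s, 0 < ⟪w, y - q⟫) : q ∉ convexHull ℝ s := by
  have hconv : Convex ℝ {y : E | ⟪w, q⟫ < ⟪w, y⟫} :=
    convex_halfSpace_gt (innerₛₗ ℝ w).isLinear _
  intro hq
  exact lt_irrefl ⟪w, q⟫
    (convexHull_min (fun y hy => by simpa [inner_sub_right] using h y hy) hconv hq)

lemma norm_sq_le_two_mul_inner_of_norm_sub_le_one {e u : E} (hu : ‖u‖ = 1)
    (he : ‖e - u‖ ≤ 1) : ‖e‖ ^ 2 ≤ 2 * ⟪e, u⟫ := by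
  have h := norm_sub_sq_real e u
  rw [hu] at h
  nlinarith [norm_nonneg (e - u)]

lemma norm_inv_norm_smul_sub_le_one {u v e : E} (hu : ‖u‖ = 1) (hv : ‖v‖ = 1)
    (heu : ‖e - u‖ ≤ 1) (hev : ‖e - v‖ ≤ 1) {s t : ℝ} (hs : 0 ≤ s) (ht : 0 ≤ t)
    (hz : s • u + t • v ≠ 0) :
    ‖‖s • u + t • v‖⁻¹ • (s • u + t • v) - e‖ ≤ 1 := by
  set z := s • u + t • v with hz_def
  have hz0 : 0 < ‖z‖ := norm_pos_iff.2 hz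
  have hzst : ‖z‖ ≤ s + t := (norm_add_le _ _).trans_eq <| by
    rw [norm_smul, norm_smul, hu, hv, Real.norm_of_nonneg hs, Real.norm_of_nonneg ht, mul_one,
      mul_one]
  have hze : ‖z‖ * ‖e‖ ^ 2 ≤ 2 * ⟪z, e⟫ := by
    have hu' := norm_sq_le_two_mul_inner_of_norm_sub_le_one hu heu
    have hv' := norm_sq_le_two_mul_inner_of_norm_sub_le_one hv hev
    have hzi : ⟪z, e⟫ = s * ⟪e, u⟫ + t * ⟪e, v⟫ := by
      rw [hz_def, inner_add_left, real_inner_smul_left, real_inner_smul_left, real_inner_comm u,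
        real_inner_comm v]
    rw [hzi]
    nlinarith [sq_nonneg ‖e‖]
  have key : ‖‖z‖⁻¹ • z - e‖ ^ 2 ≤ 1 := by
    have hz1 : ‖‖z‖⁻¹ • z‖ = 1 := norm_smul_inv_norm hz
    rw [norm_sub_sq_real, hz1, real_inner_smul_left]
    have : ‖e‖ ^ 2 ≤ ‖z‖⁻¹ * (2 * ⟪z, e⟫) := by rw [le_inv_mul_iff₀ hz0]; linarith
    nlinarith
  nlinarith [norm_nonneg (‖z‖⁻¹ • z - e)]

lemma eventually_mem_closedBall_add_smul {a q d : E} (ha : a ∈ closedBall q 1)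
    (hda : a ∈ sphere q 1 → 0 < ⟪d, a - q⟫) :
    ∀ᶠ ε in 𝓝[>] (0 : ℝ), a ∈ closedBall (q + ε • d) 1 := by
  rcases (mem_closedBall.1 ha).lt_or_eq with ha | ha
  · have hc : Continuous fun ε : ℝ => dist a (q + ε • d) := by fun_prop
    have : ∀ᶠ ε in 𝓝 (0 : ℝ), dist a (q + ε • d) < 1 :=
      hc.continuousAt.eventually_lt continuousAt_const (by simpa using ha)
    exact (this.filter_mono nhdsWithin_le_nhds).mono fun _ h => h.le
  · have hpos := hda ha
    have hδ : 0 < 2 * ⟪d, a - q⟫ / (‖d‖ ^ 2 + 1) := by positivity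
    filter_upwards [Ioo_mem_nhdsGT hδ] with ε ⟨hε0, hε⟩
    rw [lt_div_iff₀ (by positivity)] at hε
    rw [mem_closedBall, dist_eq_norm, show a - (q + ε • d) = (a - q) - ε • d by abel]
    rw [dist_eq_norm] at ha
    have h := norm_sub_sq_real (a - q) (ε • d)
    rw [ha, norm_smul, Real.norm_of_nonneg hε0.le, real_inner_smul_right, real_inner_comm] at h
    nlinarith [norm_nonneg (a - q - ε • d), sq_nonneg ‖d‖]

lemma one_lt_dist_add_smul {x q d : E} (hx : x ∈ sphere q 1) (hd : d ≠ 0)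
    (hdx : ⟪d, x - q⟫ ≤ 0) {ε : ℝ} (hε : 0 < ε) : 1 < dist x (q + ε • d) := by
  rw [mem_sphere, dist_eq_norm] at hx
  rw [dist_eq_norm, show x - (q + ε • d) = (x - q) - ε • d by abel]
  have h := norm_sub_sq_real (x - q) (ε • d)
  rw [hx, norm_smul, Real.norm_of_nonneg hε.le, real_inner_smul_right, real_inner_comm] at h
  have : 0 < (ε * ‖d‖) ^ 2 := by have := norm_pos_iff.2 hd; positivity
  nlinarith [norm_nonneg (x - q - ε • d)]

lemma exists_inner_pos_of_forall_add_smul_notMem_convexHull [CompleteSpace E] {F : Set E}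
    (hF : F.Finite) {q w : E} (hw : w ≠ 0)
    (hray : ∀ t : ℝ, 0 ≤ t → q + t • w ∉ convexHull ℝ F) :
    ∃ d : E, d ≠ 0 ∧ (∀ y ∈ F, 0 < ⟪d, y - q⟫) ∧ ⟪d, w⟫ ≤ 0 := by
  rcases F.eq_empty_or_nonempty with rfl | ⟨y₀, hy₀⟩
  · exact ⟨-w, neg_ne_zero.2 hw, by simp, by simp⟩
  set L := (fun t : ℝ => q + t • w) '' Ici 0
  have hLconv : Convex ℝ L := by
    rintro _ ⟨t₁, ht₁, rfl⟩ _ ⟨t₂, ht₂, rfl⟩ a b ha hb hab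
    refine ⟨a * t₁ + b * t₂, by simp only [mem_Ici] at *; positivity, ?_⟩
    linear_combination (norm := module) -(hab • q)
  have hLclosed : IsClosed L :=
    ((Homeomorph.addLeft q).isClosedMap.comp (isClosedMap_smul_left w)) _ isClosed_Ici
  have hdisj : Disjoint (convexHull ℝ F) L := by
    rw [disjoint_right]
    rintro _ ⟨t, ht, rfl⟩
    exact hray t ht
  obtain ⟨f, u, v, hfu, huv, hfv⟩ := geometric_hahn_banach_compact_closed
    (convex_convexHull ℝ F) (hF.isCompact_convexHull ℝ) hLconv hLclosed hdisj
  have hfq : v < f q := by simpa using hfv q ⟨0, mem_Ici.2 le_rfl, by simp⟩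
  have hfw : 0 ≤ f w := by
    by_contra! h
    have := hfv _ ⟨(f q - v) / -f w, div_nonneg (sub_nonneg.2 hfq.le) (neg_nonneg.2 h.le), rfl⟩
    simp only [map_add, map_smul, smul_eq_mul] at this
    field_simp [h.ne] at this
    linarith
  set d := -(InnerProductSpace.toDual ℝ E).symm f
  have hd : ∀ z, ⟪d, z⟫ = -f z := by simp [d, inner_neg_left]
  have hdF : ∀ y ∈ F, 0 < ⟪d, y - q⟫ := fun y hy => by
    rw [hd, map_sub]
    linarith [hfu y (subset_convexHull ℝ F hy)]
  exact ⟨d, fun h => by simpa [h] using hdF y₀ hy₀, hdF, by rw [hd]; linarith⟩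

end InnerProductSpace

section RadialShadow

variable {E : Type*} [NormedAddCommGroup E] [Module ℝ E]

def radialShadow (q : E) (A : Set E) : Set E :=
  {x | x ∈ sphere q 1 ∧ ∃ t : ℝ, 0 < t ∧ t ≤ 1 ∧ q + t • (x - q) ∈ A}

lemma subset_ball_union_radialShadow {X : Set E} {q : E} (hq : X ⊆ closedBall q 1) :
    X ⊆ ball q 1 ∪ radialShadow q (convexHull ℝ (X ∩ sphere q 1)) := by
  intro x hx
  rcases (mem_closedBall.1 (hq hx)).lt_or_eq with h | h
  · exact Or.inl h
  · refine Or.inr ⟨h, 1, one_pos, le_rfl, ?_⟩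
    rw [one_smul, add_sub_cancel]
    exact subset_convexHull ℝ _ ⟨hx, h⟩

end RadialShadow

section Spindle

variable {n : ℕ} {q a b c x d : EuclideanSpace ℝ (Fin n)}

lemma spindle_eq_of_mem_closedBall (ha : a ∈ closedBall c 1) (hb : b ∈ closedBall c 1) :
    spindle a b = ballInter (ballInter {a, b}) :=
  if_pos <| (dist_triangle_right a b c).trans <| by
    linarith [mem_closedBall.1 ha, mem_closedBall.1 hb]

lemma spindle_subset_closedBall (ha : a ∈ closedBall c 1) (hb : b ∈ closedBall c 1) :
    spindle a b ⊆ closedBall c 1 := by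
  rw [spindle_eq_of_mem_closedBall ha hb]
  exact biInter_subset_of_mem <| by
    simp [ballInter, mem_closedBall_comm.1 ha, mem_closedBall_comm.1 hb]

lemma notMem_spindle_of_inner_nonpos (ha : a ∈ closedBall q 1) (hb : b ∈ closedBall q 1)
    (hx : x ∈ sphere q 1) (hd : d ≠ 0) (hdx : ⟪d, x - q⟫ ≤ 0)
    (hda : a ∈ sphere q 1 → 0 < ⟪d, a - q⟫)
    (hdb : b ∈ sphere q 1 → 0 < ⟪d, b - q⟫) : x ∉ spindle a b := by
  obtain ⟨ε, ⟨hεa, hεb⟩, hε⟩ := ((eventually_mem_closedBall_add_smul ha hda).and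
    (eventually_mem_closedBall_add_smul hb hdb) |>.and self_mem_nhdsWithin).exists
  exact fun hxs => (one_lt_dist_add_smul hx hd hdx hε).not_ge
    (spindle_subset_closedBall hεa hεb hxs)

lemma add_inv_norm_smul_mem_spindle (ha : a ∈ sphere q 1) (hb : b ∈ sphere q 1) {s t : ℝ}
    (hs : 0 ≤ s) (ht : 0 ≤ t) (hz : s • (a - q) + t • (b - q) ≠ 0) :
    q + ‖s • (a - q) + t • (b - q)‖⁻¹ • (s • (a - q) + t • (b - q)) ∈ spindle a b := by
  rw [spindle_eq_of_mem_closedBall (sphere_subset_closedBall ha) (sphere_subset_closedBall hb)]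
  simp only [ballInter, mem_iInter, mem_insert_iff, mem_singleton_iff, forall_eq_or_imp,
    forall_eq]
  rintro e ⟨hea, heb⟩
  rw [mem_closedBall, dist_eq_norm] at hea heb ⊢
  rw [mem_sphere, dist_eq_norm] at ha hb
  set z := s • (a - q) + t • (b - q)
  rw [show q + ‖z‖⁻¹ • z - e = ‖z‖⁻¹ • z - (e - q) by abel]
  refine norm_inv_norm_smul_sub_le_one ha hb ?_ ?_ hs ht hz
  · rwa [sub_sub_sub_cancel_right]
  · rwa [sub_sub_sub_cancel_right]

lemma convex_cone_inter_sphere_of_spindleConvex {C : Set (EuclideanSpace ℝ (Fin n))}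
    (hC : SpindleConvex C) :
    Convex ℝ {y | ∃ c ∈ C ∩ sphere q 1, ∃ r : ℝ, 0 ≤ r ∧ y = q + r • (c - q)} := by
  rintro _ ⟨a, ⟨haC, haS⟩, r, hr, rfl⟩ _ ⟨b, ⟨hbC, hbS⟩, s, hs, rfl⟩ θ φ hθ hφ hθφ
  set z := (θ * r) • (a - q) + (φ * s) • (b - q)
  have hcomb : θ • (q + r • (a - q)) + φ • (q + s • (b - q)) = q + z := by
    linear_combination (norm := module) hθφ • q
  rw [hcomb]
  by_cases hz : z = 0
  · exact ⟨a, ⟨haC, haS⟩, 0, le_rfl, by simp [hz]⟩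
  refine ⟨q + ‖z‖⁻¹ • z, ⟨hC a haC b hbC ?_, ?_⟩, ‖z‖, norm_nonneg _, ?_⟩
  · exact add_inv_norm_smul_mem_spindle haS hbS (by positivity) (by positivity) hz
  · rw [mem_sphere, dist_eq_norm, add_sub_cancel_left]
    exact norm_smul_inv_norm hz
  · rw [add_sub_cancel_left, smul_smul, mul_inv_cancel₀ (norm_ne_zero_iff.2 hz), one_smul]

lemma radialShadow_convexHull_subset {X C : Set (EuclideanSpace ℝ (Fin n))} (hC : SpindleConvex C)
    (hXC : X ⊆ C) : radialShadow q (convexHull ℝ (X ∩ sphere q 1)) ⊆ C := by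
  rintro x ⟨hxS, t, ht0, -, htA⟩
  have hXS : X ∩ sphere q 1 ⊆ {y | ∃ c ∈ C ∩ sphere q 1, ∃ r : ℝ, 0 ≤ r ∧ y = q + r • (c - q)} :=
    fun y hy => ⟨y, ⟨hXC hy.1, hy.2⟩, 1, zero_le_one, by simp⟩
  obtain ⟨c, ⟨hcC, hcS⟩, r, hr, hc⟩ :=
    convexHull_min hXS (convex_cone_inter_sphere_of_spindleConvex hC) htA
  have hvec : t • (x - q) = r • (c - q) := add_left_cancel hc
  rw [mem_sphere, dist_eq_norm] at hxS hcS
  have htr : t = r := by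
    simpa [norm_smul, hxS, hcS, abs_of_pos ht0, abs_of_nonneg hr] using congrArg norm hvec
  rw [← htr] at hvec
  rwa [sub_left_inj.1 (smul_right_injective _ ht0.ne' hvec)]

lemma spindleConvex_ball_union_radialShadow {A : Set (EuclideanSpace ℝ (Fin n))} (hA : Convex ℝ A)
    (hA1 : A ⊆ closedBall q 1) (hqA : q ∉ A) : SpindleConvex (ball q 1 ∪ radialShadow q A) := by
  have hC1 : ball q 1 ∪ radialShadow q A ⊆ closedBall q 1 :=
    union_subset ball_subset_closedBall fun x hx => sphere_subset_closedBall hx.1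
  have anchor : ∀ y ∈ ball q 1 ∪ radialShadow q A, ∃ F : Set (EuclideanSpace ℝ (Fin n)),
      F.Finite ∧ F ⊆ A ∧ (y ∈ sphere q 1 → ∃ t : ℝ, 0 < t ∧ q + t • (y - q) ∈ F) := by
    rintro y (hy | ⟨-, t, ht0, -, htA⟩)
    · exact ⟨∅, finite_empty, empty_subset _,
        fun h => absurd (mem_sphere.1 h) (mem_ball.1 hy).ne⟩
    · exact ⟨{q + t • (y - q)}, finite_singleton _, singleton_subset_iff.2 htA,
        fun _ => ⟨t, ht0, rfl⟩⟩
  intro a ha b hb x hx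
  rcases (mem_closedBall.1 (spindle_subset_closedBall (hC1 ha) (hC1 hb) hx)).lt_or_eq
    with hxB | hxS
  · exact Or.inl hxB
  by_contra hxC
  obtain ⟨Fa, hFa, hFaA, haF⟩ := anchor a ha
  obtain ⟨Fb, hFb, hFbA, hbF⟩ := anchor b hb
  have hray : ∀ t : ℝ, 0 ≤ t → q + t • (x - q) ∉ convexHull ℝ (Fa ∪ Fb) := by
    intro t ht hmem
    have htA := convexHull_min (union_subset hFaA hFbA) hA hmem
    rcases ht.eq_or_lt with rfl | ht0
    · exact hqA (by simpa using htA)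
    · have ht1 := mem_closedBall.1 (hA1 htA)
      rw [dist_eq_norm, add_sub_cancel_left, norm_smul, Real.norm_of_nonneg ht0.le,
        ← dist_eq_norm, hxS, mul_one] at ht1
      exact hxC (Or.inr ⟨hxS, t, ht0, ht1, htA⟩)
  obtain ⟨d, hd, hdF, hdx⟩ := exists_inner_pos_of_forall_add_smul_notMem_convexHull
    (hFa.union hFb) (sub_ne_zero.2 (ne_of_mem_sphere hxS one_ne_zero)) hray
  have hpos : ∀ y, ∀ F ⊆ Fa ∪ Fb, (y ∈ sphere q 1 → ∃ t : ℝ, 0 < t ∧ q + t • (y - q) ∈ F) →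
      y ∈ sphere q 1 → 0 < ⟪d, y - q⟫ := by
    intro y F hF hyF hy
    obtain ⟨t, ht0, htF⟩ := hyF hy
    have h := hdF _ (hF htF)
    rw [add_sub_cancel_left, real_inner_smul_right] at h
    exact pos_of_mul_pos_right h ht0.le
  exact notMem_spindle_of_inner_nonpos (hC1 ha) (hC1 hb) hxS hd hdx
    (hpos a Fa subset_union_left haF) (hpos b Fb subset_union_right hbF) hx

end Spindle

theorem spindleHull_inter_supporting_sphere_general (n : ℕ) (hn : 2 ≤ n)
    (X : Set (EuclideanSpace ℝ (Fin n)))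
    (hcr : ∃ (p : EuclideanSpace ℝ (Fin n)) (r : ℝ), r < 1 ∧ X ⊆ Metric.closedBall p r)
    (q : EuclideanSpace ℝ (Fin n)) (hq : X ⊆ Metric.closedBall q 1) :
    (∃ v : EuclideanSpace ℝ (Fin n), ‖v‖ = 1 ∧
      ∀ x ∈ X ∩ Metric.sphere q 1, 0 < (inner ℝ v (x - q) : ℝ)) ∧
    spindleHull X ∩ Metric.sphere q 1 =
      {x : EuclideanSpace ℝ (Fin n) | x ∈ Metric.sphere q 1 ∧
        ∃ t : ℝ, 0 < t ∧ t ≤ 1 ∧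
          q + t • (x - q) ∈ convexHull ℝ (X ∩ Metric.sphere q 1)} := by
  obtain ⟨p, r, hr, hXp⟩ := hcr
  have hpos : ∀ x ∈ X ∩ sphere q 1, 0 < ⟪p - q, x - q⟫ := fun x hx =>
    inner_sub_pos_of_mem_closedBall_of_mem_sphere hr (hXp hx.1) hx.2
  have : NeZero n := ⟨by omega⟩
  obtain ⟨v, hv1, hv⟩ := exists_norm_eq_one_inner_pos (p - q)
  refine ⟨⟨v, hv1, fun x hx => hv _ (hpos x hx)⟩, Subset.antisymm ?_ fun x hx => ?_⟩
  · rintro x ⟨hxH, hxS⟩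
    have hC := spindleConvex_ball_union_radialShadow (convex_convexHull ℝ _)
      (convexHull_min (inter_subset_left.trans hq) (convex_closedBall q 1))
      (notMem_convexHull_of_inner_sub_pos hpos)
    have hxC : x ∈ ball q 1 ∪ radialShadow q (convexHull ℝ (X ∩ sphere q 1)) :=
      mem_sInter.1 hxH _ ⟨subset_ball_union_radialShadow hq, hC⟩
    exact hxC.resolve_left fun h => (mem_ball.1 h).ne hxS
  · exact ⟨mem_sInter.2 fun C hC => radialShadow_convexHull_subset hC.2 hC.1 hx, hx.1⟩

theorem spindleHull_inter_supporting_sphere (n : ℕ) (hn : 2 ≤ n)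
    (X : Set (EuclideanSpace ℝ (Fin n))) (hcl : IsClosed X)
    (hcr : ∃ (p : EuclideanSpace ℝ (Fin n)) (r : ℝ), r < 1 ∧ X ⊆ Metric.closedBall p r)
    (q : EuclideanSpace ℝ (Fin n)) (hq : X ⊆ Metric.closedBall q 1) :
    (∃ v : EuclideanSpace ℝ (Fin n), ‖v‖ = 1 ∧
      ∀ x ∈ X ∩ Metric.sphere q 1, 0 < (inner ℝ v (x - q) : ℝ)) ∧
    spindleHull X ∩ Metric.sphere q 1 =
      {x : EuclideanSpace ℝ (Fin n) | x ∈ Metric.sphere q 1 ∧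
        ∃ t : ℝ, 0 < t ∧ t ≤ 1 ∧
          q + t • (x - q) ∈ convexHull ℝ (X ∩ Metric.sphere q 1)} :=
  spindleHull_inter_supporting_sphere_general n hn X hcr q hq
end
end

section
/- Let n ≥ 2 and let 0 ≤ k ≤ n − 1. Let (S_i)_{i ∈ I} be a finite family of at least n − k spheres of codimension one in ℝⁿ, i.e. S_i = {y : ‖y − c_i‖ = r_i} with r_i > 0. Suppose that for every subset J ⊆ I with card J = n − k, the intersection ⋂_{j ∈ J} S_j is a sphere of dimension at least k + 1. Then the intersection ⋂_{i ∈ I} S_i is a sphere of dimension at least k + 1. -/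
noncomputable section

/-- `S` is a sphere of dimension at least `d`: the intersection of a sphere of
positive radius with an affine subspace through its center of dimension at least `d + 1`. -/
def IsSphereOfDimGE {n : ℕ} (d : ℕ) (S : Set (EuclideanSpace ℝ (Fin n))) : Prop :=
  ∃ (c : EuclideanSpace ℝ (Fin n)) (r : ℝ) (V : AffineSubspace ℝ (EuclideanSpace ℝ (Fin n))),
    0 < r ∧ c ∈ V ∧ d + 1 ≤ Module.finrank ℝ V.direction ∧
    S = (V : Set (EuclideanSpace ℝ (Fin n))) ∩ Metric.sphere c r

/-!
If some `n - k` of the spheres meet in a sphere `V ∩ S(c, r)` with `dim V ≥ k + 2`, their centres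
lie on the perpendicular bisector of any two points of it, so they span an affine subspace
orthogonal to `V`, of dimension at most `n - k - 2`. Hence any `n - k` centres are affinely
dependent, and all centres lie in the affine span of the centres of some `I` with `|I| < n - k`.
Any two points of `⋂_{i ∈ I} S_i` then have every centre on their perpendicular bisector, so each
`S_i` contains all of `⋂_{i ∈ I} S_i` as soon as it meets it, which it does because `I ∪ {i}`
extends to `n - k` spheres with nonempty intersection. So the whole intersection equals that of
any `n - k` spheres indexed by a superset of `I`.
-/

open Module Metric AffineSubspace
open scoped RealInnerProductSpace

section Euclidean

variable {V P : Type*} [NormedAddCommGroup V] [InnerProductSpace ℝ V] [MetricSpace P]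
  [NormedAddTorsor V P]

theorem dist_eq_of_mem_affineSpan {s : Set P} {x y q : P} (h : ∀ p ∈ s, dist p x = dist p y)
    (hq : q ∈ affineSpan ℝ s) : dist q x = dist q y :=
  mem_perpBisector_iff_dist_eq.1 <|
    affineSpan_le.2 (fun p hp ↦ mem_perpBisector_iff_dist_eq.2 (h p hp)) hq

theorem isOrtho_vectorSpan_of_forall_subset_sphere {s X : Set P}
    (h : ∀ p ∈ s, ∃ ρ, X ⊆ sphere p ρ) : vectorSpan ℝ s ⟂ vectorSpan ℝ X := by
  rw [vectorSpan_def, vectorSpan_def, Submodule.isOrtho_span]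
  rintro _ ⟨p, hp, q, hq, rfl⟩ _ ⟨x, hx, y, hy, rfl⟩
  have hbis : ∀ a ∈ s, a ∈ perpBisector y x := fun a ha ↦ by
    obtain ⟨ρ, hρ⟩ := h a ha
    rw [mem_perpBisector_iff_dist_eq, dist_comm, mem_sphere.1 (hρ hy), dist_comm,
      mem_sphere.1 (hρ hx)]
  have := vsub_mem_direction (hbis p hp) (hbis q hq)
  rw [direction_perpBisector, Submodule.mem_orthogonal_singleton_iff_inner_right] at this
  simpa only [real_inner_comm] using this

end Euclidean

section Normed

variable {V P : Type*} [NormedAddCommGroup V] [NormedSpace ℝ V] [MetricSpace P]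
  [NormedAddTorsor V P]

theorem vectorSpan_inter_sphere {A : AffineSubspace ℝ P} {c : P} {r : ℝ} (hc : c ∈ A)
    (hr : 0 < r) : vectorSpan ℝ ((A : Set P) ∩ sphere c r) = A.direction := by
  refine le_antisymm (vectorSpan_mono ℝ Set.inter_subset_left) fun v hv ↦ ?_
  rcases eq_or_ne v 0 with rfl | hv0
  · exact zero_mem _
  set u := (r / ‖v‖) • v
  have hu : ‖u‖ = r := by
    rw [norm_smul, Real.norm_eq_abs, abs_of_pos (div_pos hr (norm_pos_iff.2 hv0))]
    field_simp
  have hmem : ∀ w ∈ A.direction, ‖w‖ = r → w +ᵥ c ∈ (A : Set P) ∩ sphere c r := fun w hw hw' ↦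
    ⟨vadd_mem_of_mem_direction hw hc, by simp [hw']⟩
  have hu' : u ∈ A.direction := A.direction.smul_mem _ hv
  have h2u := vsub_mem_vectorSpan ℝ (hmem u hu' hu) (hmem (-u) (neg_mem hu') (by rwa [norm_neg]))
  rw [vadd_vsub_vadd_cancel_right, sub_neg_eq_add, ← two_smul ℝ u, smul_smul] at h2u
  have hcoef : 2 * (r / ‖v‖) ≠ 0 := by positivity
  have hv' := (vectorSpan ℝ _).smul_mem (2 * (r / ‖v‖))⁻¹ h2u
  rwa [smul_smul, inv_mul_cancel₀ hcoef, one_smul] at hv'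

end Normed

theorem exists_finset_card_lt_forall_mem_affineSpan {k V P ι : Type*} [DivisionRing k]
    [AddCommGroup V] [Module k V] [AddTorsor V P] [Fintype ι] (c : ι → P) {m : ℕ}
    (h : ∀ J : Finset ι, J.card = m → ¬ AffineIndependent k (fun j : J ↦ c j)) :
    ∃ I : Finset ι, I.card < m ∧ ∀ i, c i ∈ affineSpan k (c '' I) := by
  classical
  obtain ⟨_, ht, hspan, hind⟩ := exists_affineIndependent k V (Set.range c)
  obtain ⟨T, rfl, hinj⟩ := Set.exists_image_eq_injOn_of_subset_range ht
  refine ⟨T.toFinset, ?_, fun i ↦ ?_⟩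
  · by_contra! hm
    obtain ⟨J, hJT, hJ⟩ := Finset.exists_subset_card_eq hm
    have hJT' : ∀ j ∈ J, j ∈ T := fun j hj ↦ Set.mem_toFinset.1 (hJT hj)
    let e : J ↪ c '' T :=
      ⟨fun j ↦ ⟨c j, Set.mem_image_of_mem c (hJT' j j.2)⟩,
        fun a b hab ↦ Subtype.ext (hinj (hJT' a a.2) (hJT' b b.2) (congrArg Subtype.val hab))⟩
    exact h J hJ (hind.comp_embedding e)
  · rw [Set.coe_toFinset, hspan]
    exact subset_affineSpan k _ (Set.mem_range_self i)

section Spheres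

variable {V P ι : Type*} [NormedAddCommGroup V] [InnerProductSpace ℝ V] [MetricSpace P]
  [NormedAddTorsor V P]

theorem iInter_sphere_eq_biInter_of_mem_affineSpan (c : ι → P) (r : ι → ℝ) {I : Set ι}
    (hspan : ∀ i, c i ∈ affineSpan ℝ (c '' I))
    (hmeet : ∀ i, ((⋂ j ∈ I, sphere (c j) (r j)) ∩ sphere (c i) (r i)).Nonempty) :
    ⋂ i, sphere (c i) (r i) = ⋂ j ∈ I, sphere (c j) (r j) := by
  refine subset_antisymm (Set.subset_iInter₂ fun j _ ↦ Set.iInter_subset _ j) fun x hx ↦ ?_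
  refine Set.mem_iInter.2 fun i ↦ ?_
  obtain ⟨y, hy, hyi⟩ := hmeet i
  rw [Set.mem_iInter₂] at hx hy
  have hxy : ∀ p ∈ c '' I, dist p x = dist p y := by
    rintro _ ⟨j, hj, rfl⟩
    rw [dist_comm, mem_sphere.1 (hx j hj), dist_comm, mem_sphere.1 (hy j hj)]
  rw [mem_sphere, dist_comm, dist_eq_of_mem_affineSpan hxy (hspan i), dist_comm]
  exact hyi

end Spheres

namespace IsSphereOfDimGE

variable {n d : ℕ} {S : Set (EuclideanSpace ℝ (Fin n))}

theorem nonempty (hS : IsSphereOfDimGE d S) : S.Nonempty := by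
  obtain ⟨c, r, A, hr, hc, hdim, rfl⟩ := hS
  rw [Set.nonempty_iff_ne_empty]
  intro h
  rw [← vectorSpan_inter_sphere hc hr, h, vectorSpan_empty, finrank_bot] at hdim
  omega

theorem finrank_vectorSpan_add_le (hS : IsSphereOfDimGE d S)
    {s : Set (EuclideanSpace ℝ (Fin n))} (hs : ∀ p ∈ s, ∃ ρ, S ⊆ sphere p ρ) :
    finrank ℝ (vectorSpan ℝ s) + (d + 1) ≤ n := by
  obtain ⟨c, r, A, hr, hc, hdim, rfl⟩ := hS
  have hle := (isOrtho_vectorSpan_of_forall_subset_sphere hs).le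
  rw [vectorSpan_inter_sphere hc hr] at hle
  have hsum := A.direction.finrank_add_finrank_orthogonal
  rw [finrank_euclideanSpace_fin] at hsum
  have := Submodule.finrank_mono hle
  omega

theorem card_add_le_of_affineIndependent {ι : Type*} {c : ι → EuclideanSpace ℝ (Fin n)}
    {r : ι → ℝ} {J : Finset ι} (hS : IsSphereOfDimGE d (⋂ j ∈ J, sphere (c j) (r j)))
    (hind : AffineIndependent ℝ (fun j : J ↦ c j)) : J.card + d ≤ n := by
  have hle := hS.finrank_vectorSpan_add_le (s := Set.range fun j : J ↦ c j) <| by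
    rintro _ ⟨j, rfl⟩
    exact ⟨r j, Set.biInter_subset_of_mem j.2⟩
  rcases isEmpty_or_nonempty J with hJ | hJ
  · rw [Finset.isEmpty_coe_sort.1 hJ, Finset.card_empty]
    omega
  · have hcard := hind.finrank_vectorSpan_add_one
    rw [Fintype.card_coe] at hcard
    omega

end IsSphereOfDimGE

theorem helly_type_for_spheres_general (n k : ℕ)
    (ι : Type) [Fintype ι] (c : ι → EuclideanSpace ℝ (Fin n)) (r : ι → ℝ)
    (hcard : n - k ≤ Fintype.card ι)
    (hJ : ∀ J : Finset ι, J.card = n - k →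
      IsSphereOfDimGE (k + 1) (⋂ j ∈ J, Metric.sphere (c j) (r j))) :
    IsSphereOfDimGE (k + 1) (⋂ i, Metric.sphere (c i) (r i)) := by
  classical
  obtain ⟨I, hIcard, hspan⟩ := exists_finset_card_lt_forall_mem_affineSpan (k := ℝ) (m := n - k) c
    fun J hJc hind ↦ by
      have := (hJ J hJc).card_add_le_of_affineIndependent hind
      omega
  have hmeet (i : ι) : ((⋂ j ∈ (I : Set ι), sphere (c j) (r j)) ∩ sphere (c i) (r i)).Nonempty := by
    obtain ⟨J, hIJ, hJc⟩ := Finset.exists_superset_card_eq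
      ((Finset.card_insert_le i I).trans hIcard) hcard
    obtain ⟨x, hx⟩ := (hJ J hJc).nonempty
    rw [Set.mem_iInter₂] at hx
    exact ⟨x, Set.mem_iInter₂.2 fun j hj ↦ hx j (hIJ (Finset.mem_insert_of_mem hj)),
      hx i (hIJ (Finset.mem_insert_self i I))⟩
  obtain ⟨J, hIJ, hJc⟩ := Finset.exists_superset_card_eq hIcard.le hcard
  convert hJ J hJc using 1
  refine subset_antisymm (Set.subset_iInter₂ fun j _ ↦ Set.iInter_subset _ j) ?_
  rw [iInter_sphere_eq_biInter_of_mem_affineSpan c r hspan hmeet]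
  exact Set.biInter_subset_biInter_left hIJ

theorem helly_type_for_spheres (n k : ℕ) (hn : 2 ≤ n) (hk : k + 1 ≤ n)
    (ι : Type) [Fintype ι] (c : ι → EuclideanSpace ℝ (Fin n)) (r : ι → ℝ)
    (hr : ∀ i, 0 < r i) (hcard : n - k ≤ Fintype.card ι)
    (hJ : ∀ J : Finset ι, J.card = n - k →
      IsSphereOfDimGE (k + 1) (⋂ j ∈ J, Metric.sphere (c j) (r j))) :
    IsSphereOfDimGE (k + 1) (⋂ i, Metric.sphere (c i) (r i)) :=
  helly_type_for_spheres_general n k ι c r hcard hJ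
end
end

section
/- For every n ≥ 4 there exists a family of n + 2 distinct unit spheres in ℝⁿ such that any n + 1 of them have a common point but all n + 2 of them do not have a common point. Precisely: there exists an injective map c : Fin (n+2) → ℝⁿ such that for every index i the intersection ⋂_{j ≠ i} {y : ‖y − c(j)‖ = 1} is nonempty, while ⋂_{j} {y : ‖y − c(j)‖ = 1} = ∅. (This disproves Maehara's conjecture for n ≥ 4.) -/
noncomputable section

/-!
Let `v` be a regular simplex of `n` unit vectors with centroid `0` in the hyperplane orthogonal to
a unit vector `u`, and take as centres the scaled vertices `a • v i` and the poles `± t • u`.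
Vertices and poles both have centroid `0`, so a point `z` on all `n + 2` unit spheres would satisfy
`‖z‖² + a² = 1 = ‖z‖² + t²`, which `a² ≠ t²` rules out. All spheres but the one around `a • v i`
pass through `p • v i`, and all but the one around `± t • u` through `± (1 - t) • u`, once `a, p, t`
satisfy three quadratic equations; these are solvable when the inner product `-1/(n-1)` of two
vertices is at least `-1/3`, i.e. `n ≥ 4`. The centres are then automatically distinct: two equal
centres would make a common point of the other spheres common to all of them.
-/

open Metric InnerProductSpace

theorem injective_of_iInter_sphere_eq_empty {X ι : Type*} [PseudoMetricSpace X] {c : ι → X}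
    {r : ℝ} (hne : ∀ i, (⋂ j, ⋂ (_ : j ≠ i), sphere (c j) r).Nonempty)
    (hempty : ⋂ j, sphere (c j) r = ∅) : Function.Injective c := by
  intro i j hij
  by_contra hij'
  obtain ⟨y, hy⟩ := hne i
  rw [Set.mem_iInter₂] at hy
  refine Set.eq_empty_iff_forall_notMem.1 hempty y (Set.mem_iInter.2 fun k => ?_)
  rcases eq_or_ne k i with rfl | hk
  · exact hij ▸ hy j (Ne.symm hij')
  · exact hy k hk

theorem exists_simplexWithPoles_parameters {κ : ℝ} (hκ : -1 / 3 ≤ κ) (hκ0 : κ < 0) :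
    ∃ a p t : ℝ, p ^ 2 + t ^ 2 = 1 ∧ a ^ 2 + (1 - t) ^ 2 = 1 ∧
      p ^ 2 + a ^ 2 - 2 * κ * p * a = 1 ∧ a ^ 2 ≠ t ^ 2 := by
  -- With `p = -√(1 - t²)`, `a = √(t (2 - t))` and `q = t (1 - t)`, the third equation reduces to
  -- `κ² (2 + q) = q`, and `t (1 - t) = q` has a root `t ∈ (0, 1)` iff `q ≤ 1/4`, i.e. `κ² ≤ 1/9`.
  obtain ⟨q, hq, hq0, hq4⟩ : ∃ q : ℝ, q * (1 - κ ^ 2) = 2 * κ ^ 2 ∧ 0 < q ∧ 4 * q ≤ 1 := by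
    have hκ1 : 0 < 1 - κ ^ 2 := by nlinarith
    refine ⟨2 * κ ^ 2 / (1 - κ ^ 2), by field_simp, div_pos (by nlinarith) hκ1, ?_⟩
    rw [← mul_div_assoc, div_le_one hκ1]
    nlinarith
  obtain ⟨t, ht, ht0, ht1⟩ : ∃ t : ℝ, t * (1 - t) = q ∧ 0 < t ∧ t < 1 := by
    have hd := Real.sq_sqrt (by linarith : 0 ≤ 1 - 4 * q)
    have hd1 : Real.sqrt (1 - 4 * q) < 1 := by
      rw [Real.sqrt_lt' one_pos]; linarith
    exact ⟨(1 - Real.sqrt (1 - 4 * q)) / 2, by linear_combination -hd / 4, by linarith,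
      by linarith [Real.sqrt_nonneg (1 - 4 * q)]⟩
  have ha : 0 ≤ t * (2 - t) := by nlinarith
  have hp : 0 ≤ 1 - t ^ 2 := by nlinarith
  refine ⟨Real.sqrt (t * (2 - t)), -Real.sqrt (1 - t ^ 2), t, ?_, ?_, ?_, ?_⟩
  · rw [neg_sq, Real.sq_sqrt hp]; ring
  · rw [Real.sq_sqrt ha]; ring
  · have hpa : κ * (Real.sqrt (1 - t ^ 2) * Real.sqrt (t * (2 - t))) = -q := by
      have hsq : (-(κ * (Real.sqrt (1 - t ^ 2) * Real.sqrt (t * (2 - t))))) ^ 2 = q ^ 2 := by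
        rw [neg_sq, mul_pow, mul_pow, Real.sq_sqrt hp, Real.sq_sqrt ha]
        linear_combination (κ ^ 2 * (1 + t) * (2 - t) + κ ^ 2 * q) * ht - q * hq
      have hnonneg : 0 ≤ -(κ * (Real.sqrt (1 - t ^ 2) * Real.sqrt (t * (2 - t)))) := by
        have := mul_nonneg (Real.sqrt_nonneg (1 - t ^ 2)) (Real.sqrt_nonneg (t * (2 - t)))
        nlinarith
      linear_combination -((sq_eq_sq₀ hnonneg hq0.le).1 hsq)
    rw [neg_sq, Real.sq_sqrt hp, Real.sq_sqrt ha]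
    linear_combination 2 * hpa + 2 * ht
  · rw [Real.sq_sqrt ha]; intro h; nlinarith

section InnerProductSpace

variable {E ι : Type*} [NormedAddCommGroup E] [InnerProductSpace ℝ E]

theorem norm_sq_add_sq_eq_sq_of_sum_eq_zero [Fintype ι] [Nonempty ι] {c : ι → E}
    (hc : ∑ i, c i = 0) {ρ r : ℝ} (hρ : ∀ i, ‖c i‖ = ρ) {z : E} (hz : ∀ i, dist z (c i) = r) :
    ‖z‖ ^ 2 + ρ ^ 2 = r ^ 2 := by
  have hi : ∀ i, ‖z‖ ^ 2 + ρ ^ 2 - 2 * ⟪z, c i⟫_ℝ = r ^ 2 := fun i => by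
    rw [← hz i, dist_eq_norm, norm_sub_sq_real, hρ]; ring
  have hsum := Finset.sum_congr rfl fun i (_ : i ∈ Finset.univ) => hi i
  rw [Finset.sum_sub_distrib, ← Finset.mul_sum, ← inner_sum, hc, inner_zero_right] at hsum
  simp only [Finset.sum_const, Finset.card_univ, nsmul_eq_mul, mul_zero, sub_zero] at hsum
  exact mul_left_cancel₀ (Nat.cast_ne_zero.2 Fintype.card_ne_zero) hsum

structure IsRegularSimplexWithAxis [Fintype ι] (v : ι → E) (u : E) (κ : ℝ) : Prop where
  norm_vertex (i : ι) : ‖v i‖ = 1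
  inner_vertex {i j : ι} (hij : i ≠ j) : ⟪v i, v j⟫_ℝ = κ
  sum_vertex : ∑ i, v i = 0
  norm_axis : ‖u‖ = 1
  inner_axis (i : ι) : ⟪u, v i⟫_ℝ = 0

theorem Orthonormal.isRegularSimplexWithAxis [Fintype ι] {e : ι → E} (he : Orthonormal ℝ e)
    (hι : 2 ≤ Fintype.card ι) :
    ∃ v : ι → E, ∃ u : E, IsRegularSimplexWithAxis v u (-1 / (Fintype.card ι - 1)) := by
  classical
  set m : ℝ := (Fintype.card ι : ℝ) with hm_def
  have hm : 2 ≤ m := by rw [hm_def]; exact_mod_cast hι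
  have hm1 : m - 1 ≠ 0 := by linarith
  set s : E := ∑ k, e k
  have he_s : ∀ i, ⟪e i, s⟫_ℝ = 1 := fun i => by
    simpa using he.inner_right_sum (fun _ => (1 : ℝ)) (Finset.mem_univ i)
  have hs_e : ∀ i, ⟪s, e i⟫_ℝ = 1 := fun i => by rw [real_inner_comm, he_s]
  have hs_s : ⟪s, s⟫_ℝ = m := by
    rw [sum_inner]; simp [he_s, m]
  have hw : ∀ i j, ⟪e i - m⁻¹ • s, e j - m⁻¹ • s⟫_ℝ = (if i = j then 1 else 0) - m⁻¹ := by
    intro i j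
    simp only [inner_sub_left, inner_sub_right, inner_smul_left, inner_smul_right, he_s, hs_e,
      hs_s, orthonormal_iff_ite.1 he i j, RCLike.conj_to_real]
    field_simp
    ring
  have hws : ∀ i, ⟪s, e i - m⁻¹ • s⟫_ℝ = 0 := fun i => by
    simp only [inner_sub_right, inner_smul_right, hs_e, hs_s]
    field_simp
    ring
  have hscale : Real.sqrt (m / (m - 1)) * Real.sqrt (m / (m - 1)) = m / (m - 1) :=
    Real.mul_self_sqrt (div_nonneg (by linarith) (by linarith))
  refine ⟨fun i => Real.sqrt (m / (m - 1)) • (e i - m⁻¹ • s), (Real.sqrt m)⁻¹ • s,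
    ⟨?_, ?_, ?_, ?_, ?_⟩⟩
  · intro i
    rw [← sq_eq_sq₀ (norm_nonneg _) zero_le_one, ← real_inner_self_eq_norm_sq]
    simp only [inner_smul_left, inner_smul_right, hw, if_true, RCLike.conj_to_real, ← mul_assoc,
      hscale]
    field_simp
  · intro i j hij
    simp only [inner_smul_left, inner_smul_right, hw, if_neg hij, RCLike.conj_to_real,
      ← mul_assoc, hscale]
    field_simp
    ring
  · rw [← Finset.smul_sum, Finset.sum_sub_distrib, Finset.sum_const, Finset.card_univ,
      ← Nat.cast_smul_eq_nsmul ℝ, smul_smul, ← hm_def, mul_inv_cancel₀ (by linarith), one_smul,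
      sub_self, smul_zero]
  · rw [← sq_eq_sq₀ (norm_nonneg _) zero_le_one, ← real_inner_self_eq_norm_sq]
    simp only [inner_smul_left, inner_smul_right, hs_s, RCLike.conj_to_real, ← mul_assoc]
    rw [← mul_inv, Real.mul_self_sqrt (by linarith)]
    field_simp
  · intro i
    simp [inner_smul_left, inner_smul_right, hws]

def simplexWithPoles (v : ι → E) (u : E) (a t : ℝ) : ι ⊕ Bool → E
  | .inl i => a • v i
  | .inr b => (if b then t else -t) • u

namespace IsRegularSimplexWithAxis

variable [Fintype ι] {v : ι → E} {u : E} {κ : ℝ}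

theorem norm_smul_vertex_sub_smul_vertex_sq (h : IsRegularSimplexWithAxis v u κ) {i j : ι}
    (hij : i ≠ j) (x y : ℝ) : ‖x • v i - y • v j‖ ^ 2 = x ^ 2 + y ^ 2 - 2 * κ * x * y := by
  rw [norm_sub_sq_real, norm_smul, norm_smul, inner_smul_left, inner_smul_right,
    h.inner_vertex hij, h.norm_vertex, h.norm_vertex, RCLike.conj_to_real]
  simp only [Real.norm_eq_abs, mul_one, sq_abs]
  ring

theorem norm_smul_vertex_sub_smul_axis_sq (h : IsRegularSimplexWithAxis v u κ) (i : ι)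
    (x y : ℝ) : ‖x • v i - y • u‖ ^ 2 = x ^ 2 + y ^ 2 := by
  rw [norm_sub_sq_real, norm_smul, norm_smul, inner_smul_left, inner_smul_right,
    real_inner_comm, h.inner_axis, h.norm_vertex, h.norm_axis]
  simp only [Real.norm_eq_abs, mul_one, sq_abs]
  ring

theorem dist_simplexWithPoles (h : IsRegularSimplexWithAxis v u κ) {a p t : ℝ}
    (hp : p ^ 2 + t ^ 2 = 1) (ha : a ^ 2 + (1 - t) ^ 2 = 1)
    (hpa : p ^ 2 + a ^ 2 - 2 * κ * p * a = 1) {i j : ι ⊕ Bool} (hij : i ≠ j) :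
    dist (simplexWithPoles v u p (1 - t) i) (simplexWithPoles v u a t j) = 1 := by
  rw [dist_eq_norm, ← sq_eq_sq₀ (norm_nonneg _) zero_le_one, one_pow]
  rcases i with i | _ | _ <;> rcases j with j | _ | _ <;>
    simp only [simplexWithPoles, Bool.false_eq_true, ↓reduceIte, ne_eq, not_true_eq_false] at hij ⊢
  · rw [h.norm_smul_vertex_sub_smul_vertex_sq (hij ∘ congrArg Sum.inl), hpa]
  · rw [h.norm_smul_vertex_sub_smul_axis_sq]; linear_combination hp
  · rw [h.norm_smul_vertex_sub_smul_axis_sq]; linear_combination hp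
  · rw [norm_sub_rev, h.norm_smul_vertex_sub_smul_axis_sq]; linear_combination ha
  · rw [← sub_smul, norm_smul, h.norm_axis]; norm_num
  · rw [norm_sub_rev, h.norm_smul_vertex_sub_smul_axis_sq]; linear_combination ha
  · rw [← sub_smul, norm_smul, h.norm_axis]; norm_num

theorem exists_dist_simplexWithPoles_ne_one [Nonempty ι] (h : IsRegularSimplexWithAxis v u κ)
    {a t : ℝ} (hat : a ^ 2 ≠ t ^ 2) (z : E) : ∃ j, dist z (simplexWithPoles v u a t j) ≠ 1 := by
  by_contra! hz
  have hvert := norm_sq_add_sq_eq_sq_of_sum_eq_zero (c := fun i => a • v i) (ρ := |a|)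
    (by rw [← Finset.smul_sum, h.sum_vertex, smul_zero])
    (fun i => by simp [norm_smul, h.norm_vertex]) (fun i => hz (.inl i))
  have hpole := norm_sq_add_sq_eq_sq_of_sum_eq_zero
    (c := fun b => simplexWithPoles v u a t (.inr b)) (ρ := |t|) (by simp [simplexWithPoles])
    (fun b => by cases b <;> simp [simplexWithPoles, norm_smul, h.norm_axis]) (fun b => hz (.inr b))
  rw [sq_abs] at hvert hpole
  exact hat (by linarith)

end IsRegularSimplexWithAxis

end InnerProductSpace

theorem maehara_conjecture_counterexample (n : ℕ) (hn : 4 ≤ n) :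
    ∃ c : Fin (n + 2) → EuclideanSpace ℝ (Fin n), Function.Injective c ∧
      (∀ i : Fin (n + 2),
        (⋂ j : Fin (n + 2), ⋂ (_ : j ≠ i), Metric.sphere (c j) 1).Nonempty) ∧
      (⋂ j : Fin (n + 2), Metric.sphere (c j) 1) = ∅ := by
  obtain ⟨v, u, hvu⟩ := (EuclideanSpace.basisFun (Fin n) ℝ).orthonormal.isRegularSimplexWithAxis
    (by rw [Fintype.card_fin]; omega)
  rw [Fintype.card_fin] at hvu
  have hn' : (4 : ℝ) ≤ n := by exact_mod_cast hn
  obtain ⟨a, p, t, hp, ha, hpa, hat⟩ := exists_simplexWithPoles_parameters (κ := -1 / (n - 1))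
    (by rw [div_le_div_iff₀ (by norm_num) (by linarith)]; linarith)
    (div_neg_of_neg_of_pos (by norm_num) (by linarith))
  have : Nonempty (Fin n) := ⟨⟨0, by omega⟩⟩
  let e : Fin (n + 2) ≃ Fin n ⊕ Bool :=
    finSumFinEquiv.symm.trans (Equiv.sumCongr (Equiv.refl _) finTwoEquiv)
  have hne : ∀ i, (⋂ j, ⋂ (_ : j ≠ i), sphere (simplexWithPoles v u a t (e j)) 1).Nonempty :=
    fun i => ⟨simplexWithPoles v u p (1 - t) (e i), Set.mem_iInter₂.2 fun j hj =>
      mem_sphere.2 (hvu.dist_simplexWithPoles hp ha hpa (e.injective.ne (Ne.symm hj)))⟩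
  have hempty : ⋂ j, sphere (simplexWithPoles v u a t (e j)) 1 = ∅ := by
    refine Set.eq_empty_iff_forall_notMem.2 fun z hz => ?_
    obtain ⟨j, hj⟩ := hvu.exists_dist_simplexWithPoles_ne_one hat z
    have hzj := Set.mem_iInter.1 hz (e.symm j)
    rw [e.apply_symm_apply] at hzj
    exact hj hzj
  exact ⟨_, injective_of_iInter_sphere_eq_empty hne hempty, hne, hempty⟩
end
end

section
/- Let ι be a finite index set and let f, g : ι → ℝⁿ be such that g is a contraction of f, i.e. ‖g(i) − g(j)‖ ≤ ‖f(i) − f(j)‖ for all i, j ∈ ι, and suppose the points f(i) all lie in some closed unit ball. Then the inradius of B[g(ι)] is at least the inradius of B[f(ι)]: for every r ≥ 0, if there exists p ∈ ℝⁿ with {y : ‖y − p‖ ≤ r} ⊆ ⋂_{i ∈ ι} {y : ‖y − f(i)‖ ≤ 1}, then there exists p' ∈ ℝⁿ with {y : ‖y − p'‖ ≤ r} ⊆ ⋂_{i ∈ ι} {y : ‖y − g(i)‖ ≤ 1}. -/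
noncomputable section

/-! A closed ball of radius `r` lies in `B[f(ι)]` exactly when its centre is within `1 - r` of
every `f i`, so it suffices that the circumradius does not grow under a contraction. For weights
`w` in the standard simplex, the weighted variance of a family is half the weighted mean of its
squared pairwise distances, so the variance of `g` is at most that of `f`, which in turn is at most
`∑ w i ‖f i - p‖² ≤ (1 - r)²`. Taking `w` to maximise the variance of `g`, first-order optimality
puts every `g i` within the square root of that variance of the weighted mean of `g`. -/

open Finset Metric
open scoped RealInnerProductSpace

section WeightedVariance

variable {ι : Type*} [Fintype ι] {E F : Type*} [NormedAddCommGroup E] [InnerProductSpace ℝ E]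
  [NormedAddCommGroup F] [InnerProductSpace ℝ F]

def weightedMean (w : ι → ℝ) (x : ι → E) : E := ∑ i, w i • x i

def weightedVariance (w : ι → ℝ) (x : ι → E) : ℝ := ∑ i, w i * ‖x i - weightedMean w x‖ ^ 2

variable {w : ι → ℝ}

lemma sum_smul_sub_weightedMean (hw : ∑ i, w i = 1) (x : ι → E) :
    ∑ i, w i • (x i - weightedMean w x) = 0 := by
  simp only [smul_sub, sum_sub_distrib, ← sum_smul, hw, one_smul, weightedMean, sub_self]

lemma sum_mul_norm_sub_sq (hw : ∑ i, w i = 1) (x : ι → E) (q : E) :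
    ∑ i, w i * ‖x i - q‖ ^ 2 = weightedVariance w x + ‖weightedMean w x - q‖ ^ 2 := by
  set c := weightedMean w x
  have expand : ∀ i, w i * ‖x i - q‖ ^ 2
      = w i * ‖x i - c‖ ^ 2 + 2 * ⟪w i • (x i - c), c - q⟫ + w i * ‖c - q‖ ^ 2 := fun i => by
    rw [← sub_add_sub_cancel (x i) c q, norm_add_sq_real, real_inner_smul_left]
    ring
  rw [sum_congr rfl fun i _ => expand i, sum_add_distrib, sum_add_distrib, ← mul_sum,
    ← sum_inner, ← sum_mul, sum_smul_sub_weightedMean hw, inner_zero_left, hw, weightedVariance]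
  ring

lemma weightedVariance_le_sum_mul_norm_sub_sq (hw : ∑ i, w i = 1) (x : ι → E) (q : E) :
    weightedVariance w x ≤ ∑ i, w i * ‖x i - q‖ ^ 2 := by
  rw [sum_mul_norm_sub_sq hw]
  exact le_add_of_nonneg_right (sq_nonneg _)

lemma sum_mul_sum_mul_norm_sub_sq (hw : ∑ i, w i = 1) (x : ι → E) :
    ∑ i, w i * ∑ j, w j * ‖x i - x j‖ ^ 2 = 2 * weightedVariance w x := by
  have row_sum : ∀ i, ∑ j, w j * ‖x i - x j‖ ^ 2
      = weightedVariance w x + ‖x i - weightedMean w x‖ ^ 2 :=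
      fun i => by
    rw [norm_sub_rev (x i), ← sum_mul_norm_sub_sq hw]
    exact sum_congr rfl fun j _ => by rw [norm_sub_rev]
  simp_rw [row_sum, mul_add, sum_add_distrib, ← sum_mul, hw, weightedVariance]
  ring

lemma weightedVariance_le_of_dist_le (hw₀ : ∀ i, 0 ≤ w i) (hw : ∑ i, w i = 1) {x : ι → E}
    {y : ι → F} (hxy : ∀ i j, dist (y i) (y j) ≤ dist (x i) (x j)) :
    weightedVariance w y ≤ weightedVariance w x := by
  suffices ∑ i, w i * ∑ j, w j * ‖y i - y j‖ ^ 2 ≤ ∑ i, w i * ∑ j, w j * ‖x i - x j‖ ^ 2 by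
    rw [sum_mul_sum_mul_norm_sub_sq hw, sum_mul_sum_mul_norm_sub_sq hw] at this; linarith
  gcongr with i _ j _
  · exact hw₀ i
  · exact hw₀ j
  · simpa only [dist_eq_norm] using hxy i j

lemma continuous_weightedVariance (x : ι → E) : Continuous fun w => weightedVariance w x := by
  unfold weightedVariance weightedMean
  fun_prop

lemma weightedVariance_one_sub_smul_add_smul_single [DecidableEq ι] (hw : ∑ i, w i = 1)
    (x : ι → E) (i : ι) (t : ℝ) :
    weightedVariance ((1 - t) • w + t • Pi.single i 1) x
      = weightedVariance w x + t * ‖x i - weightedMean w x‖ ^ 2 - t * weightedVariance w x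
        - t ^ 2 * ‖x i - weightedMean w x‖ ^ 2 := by
  set w' := (1 - t) • w + t • Pi.single i 1
  set c := weightedMean w x
  have hw' : ∑ j, w' j = 1 := by
    simp [w', sum_add_distrib, ← mul_sum, hw]
  have hmean : weightedMean w' x - c = t • (x i - c) := by
    simp only [w', c, weightedMean, Pi.add_apply, Pi.smul_apply, smul_eq_mul, add_smul, mul_smul,
      sum_add_distrib, ← smul_sum, Pi.single_apply, ite_smul, one_smul, zero_smul, sum_ite_eq',
      mem_univ, if_true]
    module
  have hsum : ∑ j, w' j * ‖x j - c‖ ^ 2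
      = (1 - t) * weightedVariance w x + t * ‖x i - c‖ ^ 2 := by
    simp [w', add_mul, sum_add_distrib, mul_assoc, ← mul_sum, Pi.single_apply, weightedVariance, c]
  have := sum_mul_norm_sub_sq hw' x c
  rw [hsum, hmean, norm_smul, mul_pow, Real.norm_eq_abs, sq_abs] at this
  linarith

/-- If `D := ‖x i - weightedMean w x‖² > V := weightedVariance w x`, moving weight `t` to the
vertex `i` changes the variance by `t (D - V) - t² D`, which is positive for `t = (D - V) / 2D`. -/
lemma norm_sub_weightedMean_sq_le_of_isMaxOn (x : ι → E) (hw : w ∈ stdSimplex ℝ ι)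
    (hmax : IsMaxOn (weightedVariance · x) (stdSimplex ℝ ι) w) (i : ι) :
    ‖x i - weightedMean w x‖ ^ 2 ≤ weightedVariance w x := by
  classical
  have hV : 0 ≤ weightedVariance w x := sum_nonneg fun j _ => mul_nonneg (hw.1 j) (sq_nonneg _)
  have hperturb : ∀ t, 0 ≤ t → t ≤ 1 →
      t * ‖x i - weightedMean w x‖ ^ 2 - t * weightedVariance w x
        - t ^ 2 * ‖x i - weightedMean w x‖ ^ 2 ≤ 0 := fun t ht₀ ht₁ => by
    have hmem : (1 - t) • w + t • Pi.single i 1 ∈ stdSimplex ℝ ι :=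
      convex_stdSimplex ℝ ι hw (single_mem_stdSimplex ℝ i) (by linarith) ht₀ (by ring)
    have : weightedVariance ((1 - t) • w + t • Pi.single i 1) x ≤ weightedVariance w x :=
      hmax hmem
    linarith [weightedVariance_one_sub_smul_add_smul_single hw.2 x i t]
  generalize ‖x i - weightedMean w x‖ ^ 2 = D at hperturb ⊢
  generalize weightedVariance w x = V at hV hperturb ⊢
  by_contra! hVD
  have hD : 0 < D := hV.trans_lt hVD
  have := hperturb ((D - V) / (2 * D)) (by positivity)
    ((div_le_one (by positivity)).2 (by linarith))
  field_simp at this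
  nlinarith

lemma exists_isMaxOn_weightedVariance [Nonempty ι] (x : ι → E) :
    ∃ w ∈ stdSimplex ℝ ι, IsMaxOn (weightedVariance · x) (stdSimplex ℝ ι) w := by
  classical
  exact (isCompact_stdSimplex ℝ ι).exists_isMaxOn
    ⟨_, single_mem_stdSimplex ℝ (Classical.arbitrary ι)⟩
    (continuous_weightedVariance x).continuousOn

end WeightedVariance

theorem exists_forall_dist_le_of_dist_le {ι : Type*} [Fintype ι] {E F : Type*}
    [NormedAddCommGroup E] [InnerProductSpace ℝ E] [NormedAddCommGroup F] [InnerProductSpace ℝ F]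
    {x : ι → E} {y : ι → F} (hxy : ∀ i j, dist (y i) (y j) ≤ dist (x i) (x j)) {p : E} {R : ℝ}
    (hx : ∀ i, dist (x i) p ≤ R) : ∃ q, ∀ i, dist (y i) q ≤ R := by
  cases isEmpty_or_nonempty ι
  · exact ⟨0, isEmptyElim⟩
  obtain ⟨w, hw, hmax⟩ := exists_isMaxOn_weightedVariance y
  have hR : 0 ≤ R := dist_nonneg.trans (hx (Classical.arbitrary ι))
  have hVR : weightedVariance w y ≤ R ^ 2 := calc
    weightedVariance w y ≤ weightedVariance w x := weightedVariance_le_of_dist_le hw.1 hw.2 hxy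
    _ ≤ ∑ i, w i * ‖x i - p‖ ^ 2 := weightedVariance_le_sum_mul_norm_sub_sq hw.2 x p
    _ ≤ ∑ i, w i * R ^ 2 := by
      gcongr with i
      · exact hw.1 i
      · exact dist_eq_norm (x i) p ▸ hx i
    _ = R ^ 2 := by rw [← sum_mul, hw.2, one_mul]
  refine ⟨weightedMean w y, fun i => ?_⟩
  rw [dist_eq_norm]
  exact abs_le_of_sq_le_sq' ((norm_sub_weightedMean_sq_le_of_isMaxOn y hw hmax i).trans hVR) hR |>.2

lemma add_dist_le_of_closedBall_subset_closedBall {E : Type*} [NormedAddCommGroup E]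
    [NormedSpace ℝ E] [Nontrivial E] {p x : E} {r R : ℝ} (hr : 0 ≤ r)
    (h : closedBall p r ⊆ closedBall x R) : r + dist p x ≤ R := by
  obtain ⟨u, hu, hpx⟩ : ∃ u : E, ‖u‖ = 1 ∧ p - x = ‖p - x‖ • u := by
    by_cases hp : p - x = 0
    · obtain ⟨u, hu⟩ := exists_norm_eq E zero_le_one
      exact ⟨u, hu, by simp [hp]⟩
    · exact ⟨‖p - x‖⁻¹ • (p - x), by simp [norm_smul, hp], by simp [smul_smul, hp]⟩
  have hfar : p + r • u ∈ closedBall x R := h (by simp [norm_smul, hu, abs_of_nonneg hr])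
  have : p + r • u - x = (‖p - x‖ + r) • u := by rw [add_smul, ← hpx]; abel
  rw [mem_closedBall, dist_eq_norm, this, norm_smul, hu, mul_one,
    Real.norm_of_nonneg (by positivity)] at hfar
  rw [dist_eq_norm]; linarith

theorem inradius_monotone_under_contraction_general (n : ℕ) (ι : Type) [Fintype ι]
    (f g : ι → EuclideanSpace ℝ (Fin n))
    (hcontr : ∀ i j, dist (g i) (g j) ≤ dist (f i) (f j)) :
    ∀ r : ℝ, 0 ≤ r →
      (∃ p, Metric.closedBall p r ⊆ ⋂ i, Metric.closedBall (f i) 1) →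
      ∃ p', Metric.closedBall p' r ⊆ ⋂ i, Metric.closedBall (g i) 1 := by
  rintro r hr ⟨p, hp⟩
  rcases subsingleton_or_nontrivial (EuclideanSpace ℝ (Fin n)) with _ | _
  · exact ⟨p, fun y _ => Set.mem_iInter.2 fun i => by simp [Subsingleton.elim y (g i)]⟩
  have hf : ∀ i, dist (f i) p ≤ 1 - r := fun i => by
    have := add_dist_le_of_closedBall_subset_closedBall hr (hp.trans (Set.iInter_subset _ i))
    rw [dist_comm]; linarith
  obtain ⟨p', hp'⟩ := exists_forall_dist_le_of_dist_le hcontr hf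
  refine ⟨p', Set.subset_iInter fun i => closedBall_subset_closedBall' ?_⟩
  rw [dist_comm]; linarith [hp' i]

theorem inradius_monotone_under_contraction (n : ℕ) (ι : Type) [Fintype ι]
    (f g : ι → EuclideanSpace ℝ (Fin n))
    (hcontr : ∀ i j, dist (g i) (g j) ≤ dist (f i) (f j))
    (hball : ∃ q, ∀ i, f i ∈ Metric.closedBall q 1) :
    ∀ r : ℝ, 0 ≤ r →
      (∃ p, Metric.closedBall p r ⊆ ⋂ i, Metric.closedBall (f i) 1) →
      ∃ p', Metric.closedBall p' r ⊆ ⋂ i, Metric.closedBall (g i) 1 :=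
  inradius_monotone_under_contraction_general n ι f g hcontr
end
end

section
/- Let n ≥ 2, let X ⊆ ℝⁿ be a nonempty set of diameter at most 1, and let z be a point in the topological boundary of B[X] = ⋂_{x ∈ X} {y : ‖y − x‖ ≤ 1}. Then the Gauss image of z has spherical diameter at most π/3; that is, for any two unit vectors v₁, v₂ that are inward normals of hyperplanes supporting B[X] at z (i.e. ⟨vᵢ, y − z⟩ ≥ 0 for all y ∈ B[X], i = 1, 2), one has ⟨v₁, v₂⟩ ≥ 1/2. -/
noncomputable section

/-!
An inward unit normal `v` of `B[X]` at `z ∈ B[X]` is also the inward normal of a supporting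
unit ball: `B[X] ⊆ B(z + v, 1)`. Granting this, `diam X ≤ 1` gives `X ⊆ B[X] ⊆ B(z + v₁, 1)`,
that is `z + v₁ ∈ B[X] ⊆ B(z + v₂, 1)`, so `‖v₁ - v₂‖ ≤ 1`, which is `⟪v₁, v₂⟫ ≥ 1/2`.

The supporting ball comes from ball convexity. If `y ∈ B[X]` were outside `B(z + v, 1)`, then
`⟪v, y - z⟫ < ‖y - z‖² / 2`, and for suitable small `b, σ > 0` the point `z + b (y - z) - σ v`
is a combination `c + a (z - c) + b (y - c)` with `c = z + v`, `a + b ≥ 1`, lying close enough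
to `c` to be within distance `1` of every point that is within `1` of both `z` and `y`; so it
belongs to `B[X]` while lying strictly beyond the supporting hyperplane.
-/

open Metric

section InnerProductSpace

variable {E : Type*} [NormedAddCommGroup E] [InnerProductSpace ℝ E]

lemma norm_sub_smul_add_smul_sq (a b : ℝ) (q Z Y : E) :
    ‖q - (a • Z + b • Y)‖ ^ 2 + (a + b - 1) * ‖q‖ ^ 2 =
      a * ‖q - Z‖ ^ 2 + b * ‖q - Y‖ ^ 2 + ‖a • Z + b • Y‖ ^ 2 - a * ‖Z‖ ^ 2 - b * ‖Y‖ ^ 2 := by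
  simp only [norm_sub_sq_real, inner_add_right, real_inner_smul_right]
  ring

/-- When `‖z - c‖ = ‖y - c‖ = 1`, the last hypothesis says `‖p - c‖ ≤ 1` for the point
`p = c + a • (z - c) + b • (y - c)`. -/
lemma dist_add_smul_sub_add_smul_sub_le_one {a b : ℝ} {x z y c : E} (ha : 0 ≤ a) (hb : 0 ≤ b)
    (hab : 1 ≤ a + b) (hz : dist x z ≤ 1) (hy : dist x y ≤ 1)
    (hcap : ‖a • (z - c) + b • (y - c)‖ ^ 2 + a + b ≤ a * ‖z - c‖ ^ 2 + b * ‖y - c‖ ^ 2 + 1) :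
    dist x (c + a • (z - c) + b • (y - c)) ≤ 1 := by
  have hxz : ‖(x - c) - (z - c)‖ ^ 2 ≤ 1 := by
    rw [sub_sub_sub_cancel_right, ← dist_eq_norm]; exact pow_le_one₀ dist_nonneg hz
  have hxy : ‖(x - c) - (y - c)‖ ^ 2 ≤ 1 := by
    rw [sub_sub_sub_cancel_right, ← dist_eq_norm]; exact pow_le_one₀ dist_nonneg hy
  have hid := norm_sub_smul_add_smul_sq a b (x - c) (z - c) (y - c)
  have hsq : dist x (c + a • (z - c) + b • (y - c)) ^ 2 ≤ 1 := by
    rw [dist_eq_norm, show x - (c + a • (z - c) + b • (y - c)) =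
      (x - c) - (a • (z - c) + b • (y - c)) by abel]
    nlinarith [mul_le_mul_of_nonneg_left hxz ha, mul_le_mul_of_nonneg_left hxy hb,
      mul_nonneg (sub_nonneg.2 hab) (sq_nonneg ‖x - c‖)]
  exact (sq_le_one_iff₀ dist_nonneg).1 hsq

end InnerProductSpace

/-- The coefficients of the point `z + b • w - σ • v` in `ballInter_subset_closedBall_add`, where
`s = ⟪v, w⟫` and `q = ‖w‖²`: the third conjunct puts it beyond the hyperplane, the fourth is the
hypothesis of `dist_add_smul_sub_add_smul_sub_le_one` for `c = z + v` and `a = 1 + σ - b`. -/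
lemma exists_pos_le_one_mul_lt_and_quadratic_le {s q : ℝ} (hs : 0 ≤ s) (hsq : s < q / 2) :
    ∃ b σ : ℝ, 0 < b ∧ b ≤ 1 ∧ b * s < σ ∧ b ^ 2 * q - 2 * b * σ * s + σ ^ 2 + 2 * σ ≤ b * q := by
  obtain ⟨g, rfl⟩ : ∃ g, q = 2 * s + 2 * g := ⟨(q - 2 * s) / 2, by ring⟩
  have hg : 0 < g := by linarith
  have hD : 0 < g + (g ^ 2 / 4 + 2 * s + 2 * g) := by positivity
  set b := g / (g + (g ^ 2 / 4 + 2 * s + 2 * g))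
  have hb : 0 < b := by positivity
  have hbD : b * (g + (g ^ 2 / 4 + 2 * s + 2 * g)) = g := div_mul_cancel₀ g hD.ne'
  have hbq : b * (g ^ 2 / 4 + 2 * s + 2 * g - s ^ 2) ≤ g := by
    nlinarith [mul_nonneg hb.le (sq_nonneg s)]
  refine ⟨b, (s + g / 2) * b, hb, by nlinarith, by nlinarith, ?_⟩
  linear_combination b * hbq

section BallInter

variable {n : ℕ} {X : Set (EuclideanSpace ℝ (Fin n))}

lemma mem_ballInter_iff {y : EuclideanSpace ℝ (Fin n)} :
    y ∈ ballInter X ↔ X ⊆ closedBall y 1 := by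
  simp only [ballInter, Set.mem_iInter₂, mem_closedBall, Set.subset_def, dist_comm y]

lemma isClosed_ballInter : IsClosed (ballInter X) :=
  isClosed_biInter fun _ _ => isClosed_closedBall

lemma subset_ballInter_of_dist_le (h : ∀ x ∈ X, ∀ y ∈ X, dist x y ≤ 1) : X ⊆ ballInter X :=
  fun x hx => mem_ballInter_iff.2 fun y hy => mem_closedBall.2 (h y hy x hx)

lemma add_smul_sub_add_smul_sub_mem_ballInter {a b : ℝ} {z y c : EuclideanSpace ℝ (Fin n)}
    (hz : z ∈ ballInter X) (hy : y ∈ ballInter X) (ha : 0 ≤ a) (hb : 0 ≤ b) (hab : 1 ≤ a + b)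
    (hcap : ‖a • (z - c) + b • (y - c)‖ ^ 2 + a + b ≤ a * ‖z - c‖ ^ 2 + b * ‖y - c‖ ^ 2 + 1) :
    c + a • (z - c) + b • (y - c) ∈ ballInter X :=
  mem_ballInter_iff.2 fun _ hx => dist_add_smul_sub_add_smul_sub_le_one ha hb hab
    (mem_ballInter_iff.1 hz hx) (mem_ballInter_iff.1 hy hx) hcap

theorem ballInter_subset_closedBall_add {z v : EuclideanSpace ℝ (Fin n)}
    (hz : z ∈ ballInter X) (hv : ‖v‖ = 1)
    (hnormal : ∀ y ∈ ballInter X, 0 ≤ (inner ℝ v (y - z) : ℝ)) :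
    ballInter X ⊆ closedBall (z + v) 1 := by
  intro y hy
  by_contra hfar
  obtain ⟨w, rfl⟩ : ∃ w, y = z + w := ⟨y - z, by abel⟩
  have hzc : z - (z + v) = -v := by abel
  have hyc : z + w - (z + v) = w - v := by abel
  have hs : 0 ≤ inner ℝ v w := by simpa using hnormal _ hy
  have hgap : inner ℝ v w < ‖w‖ ^ 2 / 2 := by
    rw [mem_closedBall, dist_eq_norm, not_le, hyc] at hfar
    nlinarith [norm_sub_sq_real w v, real_inner_comm v w, norm_nonneg (w - v)]
  obtain ⟨b, σ, hb, hb1, hσ, hquad⟩ := exists_pos_le_one_mul_lt_and_quadratic_le hs hgap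
  have hp := add_smul_sub_add_smul_sub_mem_ballInter (c := z + v) hz hy (a := 1 + σ - b)
    (by nlinarith) hb.le (by nlinarith) ?_
  · have hp' : z + (b • w - σ • v) ∈ ballInter X := by convert hp using 1; module
    have hbeyond := hnormal _ hp'
    rw [add_sub_cancel_left, inner_sub_right, real_inner_smul_right, real_inner_smul_right,
      real_inner_self_eq_norm_sq, hv] at hbeyond
    nlinarith
  · rw [hzc, hyc, show (1 + σ - b) • -v + b • (w - v) = b • w - (1 + σ) • v by module,
      norm_neg, hv, norm_sub_sq_real, norm_sub_sq_real, norm_smul, norm_smul, hv,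
      real_inner_smul_left, real_inner_smul_right, Real.norm_eq_abs, Real.norm_eq_abs, mul_pow,
      mul_pow, sq_abs, sq_abs, real_inner_comm v w]
    linear_combination hquad

end BallInter

theorem gauss_image_spherical_diameter_general (n : ℕ)
    (X : Set (EuclideanSpace ℝ (Fin n)))
    (hdiam : ∀ x ∈ X, ∀ y ∈ X, dist x y ≤ 1)
    (z : EuclideanSpace ℝ (Fin n)) (hz : z ∈ frontier (ballInter X))
    (v₁ v₂ : EuclideanSpace ℝ (Fin n)) (hv₁ : ‖v₁‖ = 1) (hv₂ : ‖v₂‖ = 1)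
    (hn₁ : ∀ y ∈ ballInter X, 0 ≤ (inner ℝ v₁ (y - z) : ℝ))
    (hn₂ : ∀ y ∈ ballInter X, 0 ≤ (inner ℝ v₂ (y - z) : ℝ)) :
    (1 : ℝ) / 2 ≤ (inner ℝ v₁ (v₂) : ℝ) := by
  have hzB : z ∈ ballInter X := frontier_subset_iff_isClosed.2 isClosed_ballInter hz
  have hX : X ⊆ ballInter X := subset_ballInter_of_dist_le hdiam
  have h₁ : z + v₁ ∈ ballInter X :=
    mem_ballInter_iff.2 (hX.trans (ballInter_subset_closedBall_add hzB hv₁ hn₁))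
  have h₂ : ‖v₁ - v₂‖ ≤ 1 := by
    simpa [dist_eq_norm] using ballInter_subset_closedBall_add hzB hv₂ hn₂ h₁
  nlinarith [norm_sub_sq_real v₁ v₂, norm_nonneg (v₁ - v₂)]

theorem gauss_image_spherical_diameter (n : ℕ) (hn : 2 ≤ n)
    (X : Set (EuclideanSpace ℝ (Fin n))) (hne : X.Nonempty)
    (hdiam : ∀ x ∈ X, ∀ y ∈ X, dist x y ≤ 1)
    (z : EuclideanSpace ℝ (Fin n)) (hz : z ∈ frontier (ballInter X))
    (v₁ v₂ : EuclideanSpace ℝ (Fin n)) (hv₁ : ‖v₁‖ = 1) (hv₂ : ‖v₂‖ = 1)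
    (hn₁ : ∀ y ∈ ballInter X, 0 ≤ (inner ℝ v₁ (y - z) : ℝ))
    (hn₂ : ∀ y ∈ ballInter X, 0 ≤ (inner ℝ v₂ (y - z) : ℝ)) :
    (1 : ℝ) / 2 ≤ (inner ℝ v₁ (v₂) : ℝ) :=
  gauss_image_spherical_diameter_general n X hdiam z hz v₁ v₂ hv₁ hv₂ hn₁ hn₂
end
end
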